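/- arXiv:2412.15771 — 9 statements merged into one kernel-verified Lean document; each statement's English description precedes it below -/
import Mathlib

section
/- Let ω be a smooth differential p-form on an open set U ⊆ ℝⁿ that has constant coefficients on a neighbourhood of a point x ∈ U. Then ω is closed on a neighbourhood of x, i.e. dω = 0 on some open neighbourhood of x. -/
/-! Near `x` the form `ω` is the pullback `u^* c` of a constant form, and `c` is alternating
because `Du_x` is onto. Exterior differentiation commutes with pullback along `C²` maps (this is
where the symmetry of `D²u` enters), and a constant form has `dc = 0`. -/

/-- A smooth differential `p`-form on (an open subset of) `ℝⁿ`, modelled as a map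
assigning to each point a continuous `p`-multilinear map `(ℝⁿ)ᵖ → ℝ`
(the alternating property is stated as a separate hypothesis where needed),
has *constant coefficients* on a neighbourhood of `x` if there are an open
neighbourhood `V ⊆ U` of `x`, a `C^∞` diffeomorphism `u` from `V` onto an open
subset of `ℝⁿ` and a constant `p`-multilinear map `c` such that
`ω_y (v₁, …, v_p) = c (Du_y v₁, …, Du_y v_p)` on `V`. -/
def HasConstantCoefficientsFormAt (n p : ℕ) (U : Set (Fin n → ℝ))
    (ω : (Fin n → ℝ) → ((Fin n → ℝ) [×p]→L[ℝ] ℝ)) (x : Fin n → ℝ) : Prop :=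
  ∃ V : Set (Fin n → ℝ), IsOpen V ∧ x ∈ V ∧ V ⊆ U ∧
    ∃ u : (Fin n → ℝ) → (Fin n → ℝ),
      ContDiffOn ℝ (⊤ : ℕ∞) u V ∧ Set.InjOn u V ∧ IsOpen (u '' V) ∧
      (∀ y ∈ V, Function.Bijective (fderiv ℝ u y)) ∧
      ∃ c : (Fin n → ℝ) [×p]→L[ℝ] ℝ,
        ∀ y ∈ V, ∀ v : Fin p → (Fin n → ℝ),
          ω y v = c (fun i => fderiv ℝ u y (v i))

open Filter Topology ContinuousAlternatingMap

section

variable {𝕜 E F G : Type*} [NontriviallyNormedField 𝕜]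
  [NormedAddCommGroup E] [NormedSpace 𝕜 E] [NormedAddCommGroup F] [NormedSpace 𝕜 F]
  [NormedAddCommGroup G] [NormedSpace 𝕜 G]

theorem extDeriv_pullback_const {n : ℕ} {r : WithTop ℕ∞} (c : F [⋀^Fin n]→L[𝕜] G) {f : E → F}
    {x : E} (hf : ContDiffAt 𝕜 r f x) (hr : minSmoothness 𝕜 2 ≤ r) :
    extDeriv (fun y ↦ c.compContinuousLinearMap (fderiv 𝕜 f y)) x = 0 := by
  rw [extDeriv_pullback (ω := fun _ ↦ c) (differentiableAt_const c) hf hr]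
  ext
  simp [extDeriv, ← alternatizeUncurryFinCLM_apply]

theorem extDeriv_apply_eq_sum_fderiv {n : ℕ} {ω : E → E [×n]→L[𝕜] F}
    {Ω : E → E [⋀^Fin n]→L[𝕜] F} {x : E} (hΩ : DifferentiableAt 𝕜 Ω x)
    (hωΩ : ω =ᶠ[𝓝 x] fun y ↦ (Ω y).toContinuousMultilinearMap) (v : Fin (n + 1) → E) :
    extDeriv Ω x v =
      ∑ i : Fin (n + 1), (-1 : 𝕜) ^ (i : ℕ) • fderiv 𝕜 ω x (v i) (i.removeNth v) := by
  have hD : fderiv 𝕜 ω x = toContinuousMultilinearMapCLM 𝕜 ∘L fderiv 𝕜 Ω x := by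
    rw [hωΩ.fderiv_eq]
    exact ((toContinuousMultilinearMapCLM 𝕜).hasFDerivAt.comp x hΩ.hasFDerivAt).fderiv
  simp [extDeriv, alternatizeUncurryFin_apply, hD, ← Int.cast_smul_eq_zsmul 𝕜]

end

theorem Function.Surjective.eq_zero_of_eq_of_comp {ι M N R : Type*} [Zero R] {c : (ι → M) → R}
    {L : N → M} (hL : L.Surjective)
    (hc : ∀ v : ι → N, ∀ i j, i ≠ j → v i = v j → c (L ∘ v) = 0)
    (v : ι → M) (i j : ι) (hij : i ≠ j) (hv : v i = v j) : c v = 0 := by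
  simpa [Function.comp_def, Function.surjInv_eq hL] using
    hc (Function.surjInv hL ∘ v) i j hij (by simp [hv])

theorem HasConstantCoefficientsFormAt.exists_alternating {n p : ℕ} {U : Set (Fin n → ℝ)}
    {ω : (Fin n → ℝ) → ((Fin n → ℝ) [×p]→L[ℝ] ℝ)} {x : Fin n → ℝ}
    (hcc : HasConstantCoefficientsFormAt n p U ω x)
    (halt : ∀ y ∈ U, ∀ v : Fin p → (Fin n → ℝ), ∀ i j, i ≠ j → v i = v j → ω y v = 0) :
    ∃ V : Set (Fin n → ℝ), IsOpen V ∧ x ∈ V ∧ ∃ u : (Fin n → ℝ) → (Fin n → ℝ),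
      ContDiffOn ℝ (⊤ : ℕ∞) u V ∧ ∃ c : (Fin n → ℝ) [⋀^Fin p]→L[ℝ] ℝ,
        ∀ y ∈ V, ω y = (c.compContinuousLinearMap (fderiv ℝ u y)).toContinuousMultilinearMap := by
  obtain ⟨V, hV, hxV, hVU, u, hu, -, -, hbij, c, hωc⟩ := hcc
  have hc_alt := (hbij x hxV).2.eq_zero_of_eq_of_comp (c := c) fun v i j hij hv ↦ by
    rw [← halt x (hVU hxV) v i j hij hv, hωc x hxV]; rfl
  refine ⟨V, hV, hxV, u, hu, { c with map_eq_zero_of_eq' := fun v i j hv hij ↦ ?_ },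
    fun y hy ↦ ContinuousMultilinearMap.ext (hωc y hy)⟩
  exact hc_alt v i j hij hv

theorem constantCoefficients_closed_general (n p : ℕ) (U : Set (Fin n → ℝ))
    (ω : (Fin n → ℝ) → ((Fin n → ℝ) [×p]→L[ℝ] ℝ))
    (halt : ∀ y ∈ U, ∀ v : Fin p → (Fin n → ℝ), ∀ i j, i ≠ j → v i = v j → ω y v = 0)
    (x : Fin n → ℝ)
    (hcc : HasConstantCoefficientsFormAt n p U ω x) :
    ∃ W : Set (Fin n → ℝ), IsOpen W ∧ x ∈ W ∧
      ∀ y ∈ W, ∀ v : Fin (p + 1) → (Fin n → ℝ),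
        ∑ i : Fin (p + 1),
          (-1 : ℝ) ^ (i : ℕ) * fderiv ℝ ω y (v i) (fun j => v (i.succAbove j)) = 0 := by
  obtain ⟨V, hV, hxV, u, hu, c, hωc⟩ := hcc.exists_alternating halt
  refine ⟨V, hV, hxV, fun y hy v ↦ ?_⟩
  have hu_y : ContDiffAt ℝ (⊤ : ℕ∞) u y := hu.contDiffAt (hV.mem_nhds hy)
  have hDu : DifferentiableAt ℝ (fderiv ℝ u) y :=
    (hu_y.fderiv_right (m := 1) (WithTop.coe_le_coe.2 le_top)).differentiableAt one_ne_zero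
  have hΩ : DifferentiableAt ℝ (fun z ↦ c.compContinuousLinearMap (fderiv ℝ u z)) y :=
    (differentiableAt_const c).continuousAlternatingMapCompContinuousLinearMap hDu
  have hωΩ := eventually_of_mem (hV.mem_nhds hy) hωc
  calc _ = extDeriv (fun z ↦ c.compContinuousLinearMap (fderiv ℝ u z)) y v :=
        (extDeriv_apply_eq_sum_fderiv hΩ hωΩ v).symm
    _ = 0 := by rw [extDeriv_pullback_const c hu_y
      (by simpa using WithTop.coe_le_coe.2 (le_top : (2 : ℕ∞) ≤ ⊤))]; rfl

/-- a smooth `p`-form with constant coefficients on a neighbourhood of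
`x ∈ U` is closed on a neighbourhood of `x`:
`dω_y(v₀,…,v_p) = Σᵢ (−1)ⁱ (Dω_y(vᵢ))(v₀,…,v̂ᵢ,…,v_p) = 0` near `x`. -/
theorem constantCoefficients_closed (n p : ℕ) (U : Set (Fin n → ℝ)) (hU : IsOpen U)
    (ω : (Fin n → ℝ) → ((Fin n → ℝ) [×p]→L[ℝ] ℝ))
    (hω : ContDiffOn ℝ (⊤ : ℕ∞) ω U)
    (halt : ∀ y ∈ U, ∀ v : Fin p → (Fin n → ℝ), ∀ i j, i ≠ j → v i = v j → ω y v = 0)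
    (x : Fin n → ℝ) (hx : x ∈ U)
    (hcc : HasConstantCoefficientsFormAt n p U ω x) :
    ∃ W : Set (Fin n → ℝ), IsOpen W ∧ x ∈ W ∧
      ∀ y ∈ W, ∀ v : Fin (p + 1) → (Fin n → ℝ),
        ∑ i : Fin (p + 1),
          (-1 : ℝ) ^ (i : ℕ) * fderiv ℝ ω y (v i) (fun j => v (i.succAbove j)) = 0 :=
  constantCoefficients_closed_general n p U ω halt x hcc
end

section
/- Let ω be a smooth differential p-form on an open set U ⊆ ℝⁿ having constant coefficients on a neighbourhood of x ∈ U. Then there is an open neighbourhood V of x on which: (1) the dimension of the subspace D_y = {v ∈ ℝⁿ : i_vω_y = 0} is constant in y ∈ V; and (2) the distribution D is involutive: for any smooth vector fields X, Y : V → ℝⁿ with X_y ∈ D_y and Y_y ∈ D_y for all y ∈ V, the Lie bracket [X,Y]_y = DY_y(X_y) − DX_y(Y_y) lies in D_y for all y ∈ V. -/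
/-- `D = {v ∈ ℝⁿ : i_v ω = 0}`, the kernel of the interior product with a
(`p+1`)-multilinear form, as a subspace of `ℝⁿ`. -/
def interiorKernel (n p : ℕ) (ω : (Fin n → ℝ) [×(p + 1)]→L[ℝ] ℝ) :
    Submodule ℝ (Fin n → ℝ) where
  carrier := {v | ∀ z : Fin p → (Fin n → ℝ), ω (Fin.cons v z) = 0}
  zero_mem' := fun z => ω.map_coord_zero 0 (by simp)
  add_mem' := by
    intro a b ha hb z
    have h : Fin.cons (a + b) z
        = Function.update (Fin.cons a z : Fin (p + 1) → (Fin n → ℝ)) (0 : Fin (p + 1)) (a + b) := by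
      simp [Fin.update_cons_zero]
    have ha' : Fin.cons a z = Function.update (Fin.cons a z : Fin (p + 1) → (Fin n → ℝ)) (0 : Fin (p + 1)) a := by
      simp [Fin.update_cons_zero]
    have hb' : Fin.cons b z = Function.update (Fin.cons a z : Fin (p + 1) → (Fin n → ℝ)) (0 : Fin (p + 1)) b := by
      simp [Fin.update_cons_zero]
    rw [h, ω.map_update_add, ← ha', ← hb', ha z, hb z, add_zero]
  smul_mem' := by
    intro c a ha z
    have h : Fin.cons (c • a) z
        = Function.update (Fin.cons a z : Fin (p + 1) → (Fin n → ℝ)) (0 : Fin (p + 1)) (c • a) := by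
      simp [Fin.update_cons_zero]
    have ha' : Fin.cons a z = Function.update (Fin.cons a z : Fin (p + 1) → (Fin n → ℝ)) (0 : Fin (p + 1)) a := by
      simp [Fin.update_cons_zero]
    rw [h, ω.map_update_smul, ← ha', ha z, smul_zero]

/-! In the chart `u`, `D_y` is the preimage under `Du_y` of the fixed subspace
`K = {v : i_v c = 0}`, so its dimension is that of `K`. A vector field `W` lies in `D` exactly
when `w ↦ Du_w (W w)` takes values in `K`; the derivative of such a map takes values in the
closed subspace `K` as well, and by the symmetry of `D²u` the vector `Du_y [X, Y]_y` is the
difference of two such derivatives. -/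

open Filter Topology

theorem HasFDerivAt.apply_mem_of_eventually_mem {𝕜 E F : Type*} [NontriviallyNormedField 𝕜]
    [NormedAddCommGroup E] [NormedSpace 𝕜 E] [NormedAddCommGroup F] [NormedSpace 𝕜 F]
    {f : E → F} {f' : E →L[𝕜] F} {y : E} {K : Submodule 𝕜 F} (hK : IsClosed (K : Set F))
    (hf : HasFDerivAt f f' y) (hfK : ∀ᶠ w in 𝓝 y, f w ∈ K) (v : E) : f' v ∈ K := by
  obtain ⟨a, ha⟩ := NormedField.exists_one_lt_norm 𝕜
  have hc : Tendsto (fun k : ℕ => ‖a ^ k‖) atTop atTop := by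
    simpa only [norm_pow] using tendsto_pow_atTop_atTop_of_one_lt ha
  have hsmall : Tendsto (fun k : ℕ => (a ^ k)⁻¹) atTop (𝓝 0) := by
    simp only [← inv_pow]
    exact tendsto_pow_atTop_nhds_zero_of_norm_lt_one
      (by rw [norm_inv]; exact inv_lt_one_of_one_lt₀ ha)
  have hmove : Tendsto (fun k : ℕ => y + (a ^ k)⁻¹ • v) atTop (𝓝 y) := by
    simpa using tendsto_const_nhds.add (hsmall.smul_const v)
  refine hK.mem_of_tendsto (hf.lim v hc) ?_
  filter_upwards [hmove.eventually hfK] with k hk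
  exact K.smul_mem _ (K.sub_mem hk hfK.self_of_nhds)

theorem Submodule.finrank_comap_of_bijective {R M N : Type*} [Ring R] [AddCommGroup M]
    [Module R M] [AddCommGroup N] [Module R N] {f : M →ₗ[R] N} (hf : Function.Bijective f)
    (W : Submodule R N) : Module.finrank R (W.comap f) = Module.finrank R W := by
  rw [show f = (LinearEquiv.ofBijective f hf : M →ₗ[R] N) from rfl,
    Submodule.comap_equiv_eq_map_symm, LinearEquiv.finrank_map_eq]

theorem interiorKernel_compContinuousLinearMap {n p : ℕ}
    (c : (Fin n → ℝ) [×(p + 1)]→L[ℝ] ℝ) {L : (Fin n → ℝ) →L[ℝ] (Fin n → ℝ)}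
    (hL : Function.Surjective L) :
    interiorKernel n p (c.compContinuousLinearMap fun _ => L)
      = (interiorKernel n p c).comap (L : (Fin n → ℝ) →ₗ[ℝ] (Fin n → ℝ)) := by
  ext v
  change (∀ z, c (L ∘ Fin.cons v z) = 0) ↔ ∀ z, c (Fin.cons (L v) z) = 0
  simp only [Fin.comp_cons]
  exact ⟨fun h z => by obtain ⟨z, rfl⟩ := hL.comp_left z; exact h z, fun h z => h _⟩

theorem lieBracket_mem_comap_fderiv {𝕜 E F : Type*} [RCLike 𝕜]
    [NormedAddCommGroup E] [NormedSpace 𝕜 E] [NormedAddCommGroup F] [NormedSpace 𝕜 F]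
    {u : E → F} {K : Submodule 𝕜 F} (hK : IsClosed (K : Set F)) {X Y : E → E} {y : E}
    (hu : ContDiffAt 𝕜 2 u y) (hX : DifferentiableAt 𝕜 X y) (hY : DifferentiableAt 𝕜 Y y)
    (hXK : ∀ᶠ w in 𝓝 y, fderiv 𝕜 u w (X w) ∈ K)
    (hYK : ∀ᶠ w in 𝓝 y, fderiv 𝕜 u w (Y w) ∈ K) :
    VectorField.lieBracket 𝕜 X Y y ∈ K.comap (fderiv 𝕜 u y : E →ₗ[𝕜] F) := by
  have hdu : DifferentiableAt 𝕜 (fderiv 𝕜 u) y :=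
    (hu.fderiv_right le_rfl).differentiableAt one_ne_zero
  have push : ∀ W : E → E, DifferentiableAt 𝕜 W y →
      (∀ᶠ w in 𝓝 y, fderiv 𝕜 u w (W w) ∈ K) →
      ∀ v, fderiv 𝕜 (fun w => fderiv 𝕜 u w (W w)) y v ∈ K := fun W hW hWK =>
    (hdu.clm_apply hW).hasFDerivAt.apply_mem_of_eventually_mem hK hWK
  rw [Submodule.mem_comap, ContinuousLinearMap.coe_coe,
    VectorField.fderiv_apply_lieBracket hu (by simp) hY hX]
  exact K.sub_mem (push Y hY hYK _) (push X hX hXK _)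

theorem constantCoefficients_kernel_involutive_general (n p : ℕ) (U : Set (Fin n → ℝ))
    (ω : (Fin n → ℝ) → ((Fin n → ℝ) [×(p + 1)]→L[ℝ] ℝ))
    (x : Fin n → ℝ)
    (hcc : HasConstantCoefficientsFormAt n (p + 1) U ω x) :
    ∃ V : Set (Fin n → ℝ), IsOpen V ∧ x ∈ V ∧ V ⊆ U ∧
      (∃ k : ℕ, ∀ y ∈ V, Module.finrank ℝ (interiorKernel n p (ω y)) = k) ∧
      (∀ X Y : (Fin n → ℝ) → (Fin n → ℝ),
        ContDiffOn ℝ (⊤ : ℕ∞) X V → ContDiffOn ℝ (⊤ : ℕ∞) Y V →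
        (∀ y ∈ V, X y ∈ interiorKernel n p (ω y)) →
        (∀ y ∈ V, Y y ∈ interiorKernel n p (ω y)) →
        ∀ y ∈ V, fderiv ℝ Y y (X y) - fderiv ℝ X y (Y y) ∈ interiorKernel n p (ω y)) := by
  obtain ⟨V, hV, hxV, hVU, u, hu, -, -, hbij, c, hrep⟩ := hcc
  have hker : ∀ y ∈ V, interiorKernel n p (ω y) =
      (interiorKernel n p c).comap (fderiv ℝ u y : (Fin n → ℝ) →ₗ[ℝ] (Fin n → ℝ)) := by
    intro y hy
    rw [← interiorKernel_compContinuousLinearMap c (hbij y hy).2]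
    congr 1
    ext v
    exact hrep y hy v
  refine ⟨V, hV, hxV, hVU, ⟨Module.finrank ℝ (interiorKernel n p c), fun y hy => ?_⟩, ?_⟩
  · rw [hker y hy]
    exact Submodule.finrank_comap_of_bijective (hbij y hy) _
  intro X Y hX hY hXD hYD y hy
  have hVy : V ∈ 𝓝 y := hV.mem_nhds hy
  have hsection : ∀ W : (Fin n → ℝ) → (Fin n → ℝ),
      (∀ w ∈ V, W w ∈ interiorKernel n p (ω w)) →
      ∀ᶠ w in 𝓝 y, fderiv ℝ u w (W w) ∈ interiorKernel n p c := fun W hW =>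
    eventually_of_mem hVy fun w hw => by simpa [hker w hw] using hW w hw
  rw [hker y hy]
  exact lieBracket_mem_comap_fderiv (Submodule.closed_of_finiteDimensional _)
    ((hu.contDiffAt hVy).of_le (WithTop.coe_le_coe.mpr le_top))
    ((hX.contDiffAt hVy).differentiableAt (by simp))
    ((hY.contDiffAt hVy).differentiableAt (by simp))
    (hsection X hXD) (hsection Y hYD)

/-- if a smooth (`p+1`)-form has constant coefficients near `x`, then on
some open neighbourhood `V` of `x`: (1) the dimension of
`D_y = {v : i_v ω_y = 0}` is constant in `y ∈ V`, and (2) the distribution `D` is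
involutive: the Lie bracket `[X,Y]_y = DY_y(X_y) − DX_y(Y_y)` of smooth vector
fields lying in `D` lies again in `D`. -/
theorem constantCoefficients_kernel_involutive (n p : ℕ) (U : Set (Fin n → ℝ))
    (hU : IsOpen U)
    (ω : (Fin n → ℝ) → ((Fin n → ℝ) [×(p + 1)]→L[ℝ] ℝ))
    (hω : ContDiffOn ℝ (⊤ : ℕ∞) ω U)
    (halt : ∀ y ∈ U, ∀ v : Fin (p + 1) → (Fin n → ℝ), ∀ i j, i ≠ j → v i = v j →
      ω y v = 0)
    (x : Fin n → ℝ) (hx : x ∈ U)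
    (hcc : HasConstantCoefficientsFormAt n (p + 1) U ω x) :
    ∃ V : Set (Fin n → ℝ), IsOpen V ∧ x ∈ V ∧ V ⊆ U ∧
      (∃ k : ℕ, ∀ y ∈ V, Module.finrank ℝ (interiorKernel n p (ω y)) = k) ∧
      (∀ X Y : (Fin n → ℝ) → (Fin n → ℝ),
        ContDiffOn ℝ (⊤ : ℕ∞) X V → ContDiffOn ℝ (⊤ : ℕ∞) Y V →
        (∀ y ∈ V, X y ∈ interiorKernel n p (ω y)) →
        (∀ y ∈ V, Y y ∈ interiorKernel n p (ω y)) →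
        ∀ y ∈ V, fderiv ℝ Y y (X y) - fderiv ℝ X y (Y y) ∈ interiorKernel n p (ω y)) :=
  constantCoefficients_kernel_involutive_general n p U ω x hcc
end

section
/- Let ω be a smooth 1-form on an open set U ⊆ ℝⁿ with ω_x ≠ 0 at a point x ∈ U. Then ω has constant coefficients on a neighbourhood of x if and only if dω = 0 on a neighbourhood of x. -/
/-!
If `ω = c ∘ Du` near `y` for a constant form `c`, then `Dω = c ∘ D²u` is symmetric, i.e. `dω = 0`.
Conversely, a closed form is exact on a ball around `x` (Poincaré lemma), `ω = df`. Choosing `e`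
with `ω_x e = 1`, the map `u y = y + (f y - ω_x y) • e` has `Du_y = id + (ω_y - ω_x) ⊗ e`, hence
`ω_x ∘ Du_y = ω_y` and `Du_x = id`; by the inverse function theorem `u` is a chart near `x`, and
in it `ω` has the constant coefficients of `ω_x`.
-/

open Set Topology

section CurryFin1

variable {𝕜 E F G : Type*} [NontriviallyNormedField 𝕜]
  [NormedAddCommGroup E] [NormedSpace 𝕜 E] [NormedAddCommGroup F] [NormedSpace 𝕜 F]
  [NormedAddCommGroup G] [NormedSpace 𝕜 G]

theorem continuousMultilinearCurryFin1_apply_const (m : E [×1]→L[𝕜] F) (w : E) :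
    continuousMultilinearCurryFin1 𝕜 E F m w = m (fun _ => w) := by
  rw [continuousMultilinearCurryFin1_apply]
  congr 1

theorem ContinuousMultilinearMap.apply_eq_curryFin1_apply (m : E [×1]→L[𝕜] F)
    (v : Fin 1 → E) : m v = continuousMultilinearCurryFin1 𝕜 E F m (v 0) := by
  rw [← continuousMultilinearCurryFin1_symm_apply, LinearIsometryEquiv.symm_apply_apply]

theorem fderiv_curryFin1_apply (ω : G → E [×1]→L[𝕜] F) (y v : G) (w : E) :
    fderiv 𝕜 (fun z => continuousMultilinearCurryFin1 𝕜 E F (ω z)) y v w =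
      fderiv 𝕜 ω y v (fun _ => w) := by
  rw [show (fun z => continuousMultilinearCurryFin1 𝕜 E F (ω z)) =
    continuousMultilinearCurryFin1 𝕜 E F ∘ ω from rfl, LinearIsometryEquiv.comp_fderiv]
  exact continuousMultilinearCurryFin1_apply_const _ w

end CurryFin1

section RCLike

variable {𝕜 E F G : Type*} [RCLike 𝕜]
  [NormedAddCommGroup E] [NormedSpace 𝕜 E] [NormedAddCommGroup F] [NormedSpace 𝕜 F]
  [NormedAddCommGroup G] [NormedSpace 𝕜 G]

theorem fderiv_apply_comm_of_eventuallyEq_comp_fderiv {η : E → E →L[𝕜] G} {u : E → F}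
    (ℓ : F →L[𝕜] G) {y : E} (hu : ContDiffAt 𝕜 2 u y)
    (hη : η =ᶠ[𝓝 y] fun z => ℓ.comp (fderiv 𝕜 u z)) (v w : E) :
    fderiv 𝕜 η y v w = fderiv 𝕜 η y w v := by
  have hdu : DifferentiableAt 𝕜 (fderiv 𝕜 u) y :=
    (hu.fderiv_right (m := 1) le_rfl).differentiableAt one_ne_zero
  have hD : fderiv 𝕜 η y =
      (ContinuousLinearMap.compL 𝕜 E F G ℓ).comp (fderiv 𝕜 (fderiv 𝕜 u) y) := by
    rw [hη.fderiv_eq]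
    exact ((ContinuousLinearMap.compL 𝕜 E F G ℓ).hasFDerivAt.comp y hdu.hasFDerivAt).fderiv
  simp only [hD, ContinuousLinearMap.coe_comp, Function.comp_apply,
    ContinuousLinearMap.compL_apply, (hu.isSymmSndFDerivAt (by simp)).eq v w]

theorem exists_isOpen_injOn_bijective_fderiv [CompleteSpace E] {u : E → F} {s : Set E}
    (hs : IsOpen s) (hu : ContDiffOn 𝕜 1 u s) {x : E} (hx : x ∈ s) {A : E ≃L[𝕜] F}
    (hux : HasFDerivAt u (A : E →L[𝕜] F) x) :
    ∃ V ⊆ s, IsOpen V ∧ x ∈ V ∧ InjOn u V ∧ IsOpen (u '' V) ∧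
      ∀ y ∈ V, Function.Bijective (fderiv 𝕜 u y) := by
  have hux' : ContDiffAt 𝕜 1 u x := hu.contDiffAt (hs.mem_nhds hx)
  set Φ := hux'.toOpenPartialHomeomorph u hux one_ne_zero
  have hΦ : ⇑Φ = u := rfl
  -- invertibility of the derivative is an open condition
  let V := Φ.source ∩ (s ∩ fderiv 𝕜 u ⁻¹' range ((↑) : (E ≃L[𝕜] F) → E →L[𝕜] F))
  have hV : IsOpen V := Φ.open_source.inter <|
    (hu.continuousOn_fderiv_of_isOpen hs le_rfl).isOpen_inter_preimage hs
      ContinuousLinearEquiv.isOpen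
  have hxV : x ∈ V :=
    ⟨hux'.mem_toOpenPartialHomeomorph_source hux one_ne_zero, hx, A, hux.fderiv.symm⟩
  refine ⟨V, fun y hy => hy.2.1, hV, hxV, ?_, ?_, ?_⟩
  · exact hΦ ▸ Φ.injOn.mono inter_subset_left
  · exact hΦ ▸ Φ.isOpen_image_of_subset_source hV inter_subset_left
  · rintro y ⟨-, -, B, hB⟩
    rw [← hB]
    exact B.bijective

theorem exists_contDiffOn_comp_fderiv_eq_of_hasFDerivAt {s : Set E} (hs : IsOpen s)
    {η : E → E →L[𝕜] 𝕜} (hη : ContDiffOn 𝕜 (⊤ : ℕ∞) η s) {f : E → 𝕜}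
    (hf : ∀ y ∈ s, HasFDerivAt f (η y) y) {x : E} (hx : x ∈ s) (hx0 : η x ≠ 0) :
    ∃ u : E → E, ContDiffOn 𝕜 (⊤ : ℕ∞) u s ∧ HasFDerivAt u (.id 𝕜 E) x ∧
      ∀ y ∈ s, (η x).comp (fderiv 𝕜 u y) = η y := by
  obtain ⟨e, he⟩ : ∃ e, η x e = 1 :=
    LinearMap.surjective (f := (η x : E →ₗ[𝕜] 𝕜)) (by exact_mod_cast hx0) 1
  have hu : ∀ y ∈ s, HasFDerivAt (fun z => z + (f z - η x z) • e)
      (.id 𝕜 E + (η y - η x).smulRight e) y := fun y hy =>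
    (hasFDerivAt_id y).add (((hf y hy).sub (η x).hasFDerivAt).smul_const e)
  have hf_smooth : ContDiffOn 𝕜 (⊤ : ℕ∞) f s :=
    (contDiffOn_infty_iff_fderiv_of_isOpen hs).2
      ⟨fun y hy => (hf y hy).differentiableAt.differentiableWithinAt,
        hη.congr fun y hy => (hf y hy).fderiv⟩
  refine ⟨fun z => z + (f z - η x z) • e,
    contDiffOn_id.add ((hf_smooth.sub (η x).contDiff.contDiffOn).smul contDiffOn_const),
    by simpa using hu x hx, fun y hy => ?_⟩
  rw [(hu y hy).fderiv]
  ext v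
  simp [he]

end RCLike

theorem exists_chart_eq_comp_fderiv_of_fderiv_symm {E : Type*} [NormedAddCommGroup E]
    [NormedSpace ℝ E] [CompleteSpace E] {s : Set E} (hs : IsOpen s) {η : E → E →L[ℝ] ℝ}
    (hη : ContDiffOn ℝ (⊤ : ℕ∞) η s)
    (hdη : ∀ y ∈ s, ∀ v w, fderiv ℝ η y v w = fderiv ℝ η y w v) {x : E} (hx : x ∈ s)
    (hx0 : η x ≠ 0) :
    ∃ V ⊆ s, IsOpen V ∧ x ∈ V ∧ ∃ u : E → E, ContDiffOn ℝ (⊤ : ℕ∞) u V ∧ InjOn u V ∧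
      IsOpen (u '' V) ∧ (∀ y ∈ V, Function.Bijective (fderiv ℝ u y)) ∧
      ∀ y ∈ V, η y = (η x).comp (fderiv ℝ u y) := by
  obtain ⟨r, hr, hball⟩ := Metric.isOpen_iff.1 hs x hx
  obtain ⟨f, hf⟩ := (convex_ball x r).exists_forall_hasFDerivAt_of_fderiv_symmetric
    Metric.isOpen_ball ((hη.differentiableOn (by simp)).mono hball) fun y hy => hdη y (hball hy)
  obtain ⟨u, hu, hux, hcomp⟩ := exists_contDiffOn_comp_fderiv_eq_of_hasFDerivAt
    Metric.isOpen_ball (hη.mono hball) hf (Metric.mem_ball_self hr) hx0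
  obtain ⟨V, hVball, hV, hxV, hinj, himg, hbij⟩ := exists_isOpen_injOn_bijective_fderiv
    Metric.isOpen_ball (hu.of_le (by simp)) (Metric.mem_ball_self hr) (A := .refl ℝ E) hux
  exact ⟨V, hVball.trans hball, hV, hxV, u, hu.mono hVball, hinj, himg, hbij,
    fun y hy => (hcomp y (hVball hy)).symm⟩

/-- a smooth `1`-form `ω` with `ω_x ≠ 0` has constant coefficients on a
neighbourhood of `x` if and only if `dω = 0` on a neighbourhood of `x`, where
`dω_y(v₀,v₁) = (Dω_y(v₀))(v₁) − (Dω_y(v₁))(v₀)`. -/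
theorem oneForm_constantCoefficients_iff_closed (n : ℕ) (U : Set (Fin n → ℝ))
    (hU : IsOpen U)
    (ω : (Fin n → ℝ) → ((Fin n → ℝ) [×1]→L[ℝ] ℝ))
    (hω : ContDiffOn ℝ (⊤ : ℕ∞) ω U)
    (x : Fin n → ℝ) (hx : x ∈ U) (hx0 : ω x ≠ 0) :
    HasConstantCoefficientsFormAt n 1 U ω x ↔
      ∃ W : Set (Fin n → ℝ), IsOpen W ∧ x ∈ W ∧
        ∀ y ∈ W, ∀ v₀ v₁ : Fin n → ℝ,
          fderiv ℝ ω y v₀ (fun _ => v₁) - fderiv ℝ ω y v₁ (fun _ => v₀) = 0 := by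
  let κ := continuousMultilinearCurryFin1 ℝ (Fin n → ℝ) ℝ
  constructor
  · rintro ⟨V, hV, hxV, -, u, hu, -, -, -, c, hc⟩
    refine ⟨V, hV, hxV, fun y hy v₀ v₁ => ?_⟩
    have hpullback : (fun z => κ (ω z)) =ᶠ[𝓝 y] fun z => (κ c).comp (fderiv ℝ u z) := by
      filter_upwards [hV.mem_nhds hy] with z hz
      ext w
      rw [continuousMultilinearCurryFin1_apply_const, hc z hz]
      exact c.apply_eq_curryFin1_apply _
    rw [sub_eq_zero, ← fderiv_curryFin1_apply, ← fderiv_curryFin1_apply]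
    exact fderiv_apply_comm_of_eventuallyEq_comp_fderiv _
      ((hu.contDiffAt (hV.mem_nhds hy)).of_le (WithTop.coe_le_coe.2 le_top)) hpullback v₀ v₁
  · rintro ⟨W, hW, hxW, hclosed⟩
    obtain ⟨V, hVs, hV, hxV, u, hu, hinj, himg, hbij, hcomp⟩ :=
      exists_chart_eq_comp_fderiv_of_fderiv_symm (η := fun y => κ (ω y)) (hU.inter hW)
        (κ.toContinuousLinearEquiv.contDiff.comp_contDiffOn (hω.mono inter_subset_left))
        (fun y hy v w => by
          rw [fderiv_curryFin1_apply, fderiv_curryFin1_apply]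
          exact sub_eq_zero.1 (hclosed y hy.2 v w))
        ⟨hx, hxW⟩ (by simpa using hx0)
    refine ⟨V, hV, hxV, fun y hy => (hVs hy).1, u, hu, hinj, himg, hbij, ω x, fun y hy v => ?_⟩
    rw [(ω y).apply_eq_curryFin1_apply, (ω x).apply_eq_curryFin1_apply, hcomp y hy]
    rfl
end

section
/- Let ω be a smooth n-form on an open set U ⊆ ℝⁿ and x ∈ U. Then ω has constant coefficients on a neighbourhood of x if and only if either ω vanishes identically on some neighbourhood of x, or ω_x ≠ 0. -/
/-!
Write `ω y = f y • det`. If `ω` has constant coefficients `c` in a chart `u` and `ω x = 0`, then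
`c = 0` because `Du_x` is onto, so `ω` vanishes near `x`. Conversely, a form vanishing near `x`
has constant coefficients in the identity chart, and if `f x ≠ 0` we take a smooth `F` with
`∂ᵢF = f` near `x` (a primitive in one variable of a cut-off of `f`) and replace the `i`-th
coordinate by `F / f x`. The new chart has `det Du = f / f x`, hence `ω y = ω x ∘ Du_y`, and the
inverse function theorem makes it a diffeomorphism near `x`.
-/

open Set Function Filter Topology MeasureTheory
open scoped Convolution

theorem LinearMap.det_id_add_smulRight {R ι : Type*} [CommRing R] [Fintype ι] [DecidableEq ι]
    (ℓ : (ι → R) →ₗ[R] R) (e : ι → R) :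
    LinearMap.det (LinearMap.id + ℓ.smulRight e) = 1 + ℓ e := by
  have hmat : LinearMap.toMatrix' (LinearMap.id + ℓ.smulRight e) =
      1 + Matrix.replicateCol Unit e * Matrix.replicateRow Unit (fun j => ℓ (Pi.single j 1)) := by
    ext i j
    simp [LinearMap.toMatrix'_apply, Matrix.one_apply, Pi.single_apply, Matrix.mul_apply, mul_comm]
  rw [← LinearMap.det_toMatrix', hmat, Matrix.det_one_add_replicateCol_mul_replicateRow]
  conv_rhs => rw [← Finset.univ_sum_single e, map_sum]
  refine congrArg (1 + ·) (Finset.sum_congr rfl fun j _ => ?_)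
  rw [mul_comm, ← smul_eq_mul, ← map_smul, ← Pi.single_smul', smul_eq_mul, mul_one]

theorem MultilinearMap.apply_eq_apply_basis_mul_det {R M ι : Type*} [CommRing R]
    [AddCommGroup M] [Module R M] [Fintype ι] [DecidableEq ι] (b : Module.Basis ι R M)
    (ω : MultilinearMap R (fun _ : ι => M) R)
    (halt : ∀ v : ι → M, ∀ i j, i ≠ j → v i = v j → ω v = 0) (v : ι → M) :
    ω v = ω b * b.det v :=
  let A : M [⋀^ι]→ₗ[R] R := ⟨ω, fun v i j hv hij => halt v i j hij hv⟩
  congrArg (· v) (A.eq_smul_basis_det b)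

theorem Function.update_add_smul_single {ι : Type*} [DecidableEq ι] (p : ι → ℝ) (i : ι)
    (s t : ℝ) : update (p + s • Pi.single i 1) i t = update p i t := by
  ext j
  by_cases hj : j = i <;> simp [hj]

theorem contDiff_uncurry_update {ι : Type*} [Fintype ι] [DecidableEq ι] (i : ι)
    {n : WithTop ℕ∞} : ContDiff ℝ n fun q : (ι → ℝ) × ℝ => update q.1 i q.2 := by
  refine contDiff_pi.2 fun j => ?_
  by_cases hj : j = i
  · subst hj; simpa using contDiff_snd
  · simp only [update_of_ne hj]
    exact (contDiff_apply ℝ ℝ j).comp contDiff_fst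

theorem det_fderiv_update {ι : Type*} [Fintype ι] [DecidableEq ι] {φ : (ι → ℝ) → ℝ}
    {y : ι → ℝ} (hφ : DifferentiableAt ℝ φ y) (i : ι) :
    (fderiv ℝ (fun y => update y i (φ y)) y).det = fderiv ℝ φ y (Pi.single i 1) := by
  have hshear : (fun y => update y i (φ y)) = fun y => y + (φ y - y i) • Pi.single i 1 := by
    ext y j
    by_cases hj : j = i
    · subst hj; simp
    · simp [hj]
  have hD : HasFDerivAt (fun y => update y i (φ y)) (ContinuousLinearMap.id ℝ (ι → ℝ) +
      (fderiv ℝ φ y - ContinuousLinearMap.proj i).smulRight (Pi.single i 1)) y := by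
    rw [hshear]
    exact (hasFDerivAt_id y).add
      ((hφ.hasFDerivAt.sub (ContinuousLinearMap.proj i).hasFDerivAt).smul_const _)
  rw [hD.fderiv, ContinuousLinearMap.det]
  convert LinearMap.det_id_add_smulRight
    ((fderiv ℝ φ y : (ι → ℝ) →ₗ[ℝ] ℝ) - LinearMap.proj i) (Pi.single i 1) using 2
  · ext; simp
  · simp

theorem hasDerivAt_integral_Iic {E : Type*} [NormedAddCommGroup E] [NormedSpace ℝ E]
    [CompleteSpace E] {h : ℝ → E} (hc : Continuous h) (hi : Integrable h) (z : ℝ) :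
    HasDerivAt (fun w => ∫ t in Iic w, h t) (h z) z := by
  have hsplit : (fun w => ∫ t in Iic w, h t) = fun w => (∫ t in Iic z, h t) + ∫ t in z..w, h t :=
    funext fun w => by
      rw [← intervalIntegral.integral_Iic_sub_Iic hi.integrableOn hi.integrableOn]; abel
  rw [hsplit]
  exact (hc.integral_hasStrictDerivAt z z).hasDerivAt.const_add _

theorem convolution_indicator_Ici_eq_integral_Iic {E : Type*} [NormedAddCommGroup E]
    [NormedSpace ℝ E] (h : ℝ → E) (z : ℝ) :
    ((Ici 0).indicator 1 ⋆[ContinuousLinearMap.lsmul ℝ ℝ, volume] h) z = ∫ t in Iic z, h t := by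
  rw [convolution_eq_swap, ← integral_indicator measurableSet_Iic]
  congr 1 with t
  by_cases ht : t ≤ z <;> simp [indicator, ht]

/- `F y = ∫_{t ≤ yᵢ} g (update y i t) dt`. Written as a convolution with the Heaviside function,
its joint smoothness in `y` and the upper limit is `contDiffOn_convolution_right_with_param`. -/
theorem HasCompactSupport.exists_contDiff_hasLineDerivAt_single {ι E : Type*} [Fintype ι]
    [DecidableEq ι] [NormedAddCommGroup E] [NormedSpace ℝ E] [CompleteSpace E] {n : ℕ∞}
    {g : (ι → ℝ) → E} (hg : ContDiff ℝ n g) (hgc : HasCompactSupport g) (i : ι) :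
    ∃ F : (ι → ℝ) → E, ContDiff ℝ n F ∧ ∀ y, HasLineDerivAt ℝ F (g y) y (Pi.single i 1) := by
  set G : (ι → ℝ) → ℝ → E := fun p t => g (update p i t)
  set Ψ : (ι → ℝ) → ℝ → E := fun p => (Ici 0).indicator 1 ⋆[ContinuousLinearMap.lsmul ℝ ℝ] G p
  set k := (fun p : ι → ℝ => p i) '' tsupport g
  have hk : IsCompact k := hgc.image (continuous_apply i)
  have hGk : ∀ p t, t ∉ k → G p t = 0 := fun p t ht =>
    image_eq_zero_of_notMem_tsupport (f := g) fun h => ht ⟨_, h, update_self ..⟩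
  have hG : ContDiff ℝ n ↿G := hg.comp (contDiff_uncurry_update i)
  have hΨ : ContDiff ℝ n ↿Ψ := by
    have := contDiffOn_convolution_right_with_param (ContinuousLinearMap.lsmul ℝ ℝ) isOpen_univ
      hk (fun p t _ => hGk p t)
      ((locallyIntegrable_const (μ := volume) 1).indicator (measurableSet_Ici (a := 0)))
      hG.contDiffOn
    rwa [univ_prod_univ, contDiffOn_univ] at this
  refine ⟨fun y => Ψ y (y i), hΨ.comp (contDiff_id.prodMk (contDiff_apply ℝ ℝ i)), fun y => ?_⟩
  have hline : (fun s : ℝ => Ψ (y + s • Pi.single i 1) ((y + s • Pi.single i 1 : ι → ℝ) i)) =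
      fun s => Ψ y (y i + s) := by
    ext s
    simp [Ψ, G, update_add_smul_single]
  have hderiv : HasDerivAt (fun z => Ψ y z) (g y) (y i) := by
    have hGy : Continuous (G y) := hg.continuous.comp (continuous_const.update i continuous_id)
    have := hasDerivAt_integral_Iic hGy
      (hGy.integrable_of_hasCompactSupport (HasCompactSupport.intro hk (hGk y))) (y i)
    simpa [Ψ, convolution_indicator_Ici_eq_integral_Iic, G] using this
  show HasDerivAt _ _ _
  rw [hline]
  simpa using HasDerivAt.comp_const_add (y i) 0 (by simpa using hderiv)

theorem ContDiffOn.exists_contDiff_hasCompactSupport_eventuallyEq {E : Type*}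
    [NormedAddCommGroup E] [NormedSpace ℝ E] [FiniteDimensional ℝ E] {n : ℕ∞} {f : E → ℝ}
    {U : Set E} {x : E} (hf : ContDiffOn ℝ n f U) (hU : U ∈ 𝓝 x) :
    ∃ g : E → ℝ, ContDiff ℝ n g ∧ HasCompactSupport g ∧ g =ᶠ[𝓝 x] f := by
  obtain ⟨ε, hε, hεU⟩ := Metric.nhds_basis_ball.mem_iff.1 hU
  let χ : ContDiffBump x := ⟨ε / 4, ε / 2, by positivity, by linarith⟩
  refine ⟨fun y => χ y * f y, contDiff_iff_contDiffAt.2 fun y => ?_,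
    χ.hasCompactSupport.mul_right, ?_⟩
  · by_cases hy : y ∈ tsupport χ
    · rw [χ.tsupport_eq] at hy
      have hyε : y ∈ Metric.ball x ε := Metric.closedBall_subset_ball (half_lt_self hε) hy
      exact χ.contDiffAt.mul (hf.contDiffAt (mem_of_superset (Metric.isOpen_ball.mem_nhds hyε) hεU))
    · refine (contDiffAt_const (c := (0 : ℝ))).congr_of_eventuallyEq ?_
      filter_upwards [notMem_tsupport_iff_eventuallyEq.1 hy] with z hz
      simp [hz]
  · filter_upwards [χ.eventuallyEq_one] with y hy
    simp [hy]

theorem hasConstantCoefficientsFormAt_of_bijective_fderiv {n p : ℕ} {U S : Set (Fin n → ℝ)}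
    {ω : (Fin n → ℝ) → ((Fin n → ℝ) [×p]→L[ℝ] ℝ)} {x : Fin n → ℝ}
    (hS : IsOpen S) (hxS : x ∈ S) (hSU : S ⊆ U) {u : (Fin n → ℝ) → (Fin n → ℝ)}
    (hu : ContDiff ℝ (⊤ : ℕ∞) u) (hbij : ∀ y ∈ S, Bijective (fderiv ℝ u y))
    (c : (Fin n → ℝ) [×p]→L[ℝ] ℝ) (hc : ∀ y ∈ S, ∀ v, ω y v = c fun i => fderiv ℝ u y (v i)) :
    HasConstantCoefficientsFormAt n p U ω x := by
  set Du := ContinuousLinearEquiv.ofBijective (fderiv ℝ u x)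
    (LinearMap.ker_eq_bot.2 (hbij x hxS).1) (LinearMap.range_eq_top.2 (hbij x hxS).2)
  have hstrict : HasStrictFDerivAt u (Du : (Fin n → ℝ) →L[ℝ] (Fin n → ℝ)) x := by
    rw [ContinuousLinearEquiv.coe_ofBijective]
    exact hu.contDiffAt.hasStrictFDerivAt (by simp)
  set φ := hstrict.toOpenPartialHomeomorph u
  have hφ : ⇑φ = u := hstrict.toOpenPartialHomeomorph_coe
  refine ⟨φ.source ∩ S, φ.open_source.inter hS, ⟨hstrict.mem_toOpenPartialHomeomorph_source, hxS⟩,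
    inter_subset_right.trans hSU, u, hu.contDiffOn, ?_, ?_, fun y hy => hbij y hy.2, c,
    fun y hy => hc y hy.2⟩
  · exact hφ ▸ φ.injOn.mono inter_subset_left
  · exact hφ ▸ φ.isOpen_image_of_subset_source (φ.open_source.inter hS) inter_subset_left

theorem HasConstantCoefficientsFormAt.eventually_eq_zero {n p : ℕ} {U : Set (Fin n → ℝ)}
    {ω : (Fin n → ℝ) → ((Fin n → ℝ) [×p]→L[ℝ] ℝ)} {x : Fin n → ℝ}
    (h : HasConstantCoefficientsFormAt n p U ω x) (h0 : ω x = 0) : ∀ᶠ y in 𝓝 x, ω y = 0 := by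
  obtain ⟨V, hV, hxV, -, u, -, -, -, hbij, c, hc⟩ := h
  have hc0 : c = 0 := by
    ext w
    have hw : (fun i => fderiv ℝ u x (surjInv (hbij x hxV).2 (w i))) = w :=
      funext fun i => surjInv_eq _ _
    rw [← hw, ← hc x hxV, h0]
    rfl
  filter_upwards [hV.mem_nhds hxV] with y hy
  ext v
  rw [hc y hy, hc0]
  rfl

theorem hasConstantCoefficientsFormAt_of_apply_ne_zero {n : ℕ} {U : Set (Fin n → ℝ)}
    (hU : IsOpen U) {ω : (Fin n → ℝ) → ((Fin n → ℝ) [×n]→L[ℝ] ℝ)}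
    (hω : ContDiffOn ℝ (⊤ : ℕ∞) ω U)
    (halt : ∀ y ∈ U, ∀ v : Fin n → (Fin n → ℝ), ∀ i j, i ≠ j → v i = v j → ω y v = 0)
    {x : Fin n → ℝ} (hx : x ∈ U) (hne : ω x ≠ 0) :
    HasConstantCoefficientsFormAt n n U ω x := by
  rcases isEmpty_or_nonempty (Fin n) with hn | ⟨⟨i⟩⟩
  · refine hasConstantCoefficientsFormAt_of_bijective_fderiv hU hx subset_rfl contDiff_id
      (fun _ _ => by rw [fderiv_id]; exact bijective_id) (ω x) fun y _ v => ?_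
    simp [Subsingleton.elim y x]
  set b := Pi.basisFun ℝ (Fin n)
  set f : (Fin n → ℝ) → ℝ := fun y => ω y b
  have hrep : ∀ y ∈ U, ∀ v, ω y v = f y * b.det v := fun y hy v =>
    (ω y).toMultilinearMap.apply_eq_apply_basis_mul_det b (halt y hy) v
  have hfx : f x ≠ 0 := fun h => hne <| ContinuousMultilinearMap.ext fun v => by
    simp [hrep x hx v, h]
  have hf : ContDiffOn ℝ (⊤ : ℕ∞) f U :=
    (ContinuousMultilinearMap.apply ℝ _ ℝ b).contDiff.comp_contDiffOn hω
  obtain ⟨g, hg, hgc, hgf⟩ := hf.exists_contDiff_hasCompactSupport_eventuallyEq (hU.mem_nhds hx)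
  obtain ⟨W, hWgf, hW, hxW⟩ := eventually_nhds_iff.1 hgf
  obtain ⟨F, hF, hFg⟩ := hgc.exists_contDiff_hasLineDerivAt_single hg i
  set u : (Fin n → ℝ) → (Fin n → ℝ) := fun y => update y i ((f x)⁻¹ * F y)
  have hu : ContDiff ℝ (⊤ : ℕ∞) u :=
    (contDiff_uncurry_update i).comp (contDiff_id.prodMk (contDiff_const.mul hF))
  set S := U ∩ W ∩ {y | g y ≠ 0}
  have hdet : ∀ y ∈ S, (fderiv ℝ u y).det = (f x)⁻¹ * f y := fun y hy => by
    have hFy : DifferentiableAt ℝ F y := hF.differentiable (by simp) y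
    rw [det_fderiv_update (hFy.const_mul _) i, fderiv_const_mul hFy, smul_apply,
      hFy.hasFDerivAt.hasLineDerivAt _ |>.unique (hFg y), hWgf y hy.1.2, smul_eq_mul]
  have hdet_ne : ∀ y ∈ S, (fderiv ℝ u y).det ≠ 0 := fun y hy => by
    rw [hdet y hy, ← hWgf y hy.1.2]
    exact mul_ne_zero (inv_ne_zero hfx) hy.2
  refine hasConstantCoefficientsFormAt_of_bijective_fderiv
    ((hU.inter hW).inter (isOpen_ne_fun hg.continuous continuous_const)) ⟨⟨hx, hxW⟩, ?_⟩
    (inter_subset_left.trans inter_subset_left) hu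
    (fun y hy => ((fderiv ℝ u y).toContinuousLinearEquivOfDetNeZero (hdet_ne y hy)).bijective)
    (ω x) fun y hy v => ?_
  · rw [mem_ofPred_eq, hWgf x hxW]
    exact hfx
  calc ω y v = f x * ((f x)⁻¹ * f y) * b.det v := by rw [hrep y hy.1.1, mul_inv_cancel_left₀ hfx]
    _ = ω x fun j => fderiv ℝ u y (v j) := by
        rw [hrep x hx, ← hdet y hy, mul_assoc, ← b.det_comp]
        rfl

/-- a smooth `n`-form (top degree) on `U ⊆ ℝⁿ` has constant coefficients
on a neighbourhood of `x ∈ U` if and only if either it vanishes identically on some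
neighbourhood of `x`, or `ω_x ≠ 0`. -/
theorem topForm_constantCoefficients_iff (n : ℕ) (U : Set (Fin n → ℝ)) (hU : IsOpen U)
    (ω : (Fin n → ℝ) → ((Fin n → ℝ) [×n]→L[ℝ] ℝ))
    (hω : ContDiffOn ℝ (⊤ : ℕ∞) ω U)
    (halt : ∀ y ∈ U, ∀ v : Fin n → (Fin n → ℝ), ∀ i j, i ≠ j → v i = v j → ω y v = 0)
    (x : Fin n → ℝ) (hx : x ∈ U) :
    HasConstantCoefficientsFormAt n n U ω x ↔
      ((∃ W : Set (Fin n → ℝ), IsOpen W ∧ x ∈ W ∧ ∀ y ∈ W, ω y = 0) ∨ ω x ≠ 0) := by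
  constructor
  · intro h
    by_cases h0 : ω x = 0
    · obtain ⟨W, hW0, hW, hxW⟩ := eventually_nhds_iff.1 (h.eventually_eq_zero h0)
      exact .inl ⟨W, hW, hxW, hW0⟩
    · exact .inr h0
  · rintro (⟨W, hW, hxW, hW0⟩ | hne)
    · refine hasConstantCoefficientsFormAt_of_bijective_fderiv (hU.inter hW) ⟨hx, hxW⟩
        inter_subset_left contDiff_id (fun _ _ => by rw [fderiv_id]; exact bijective_id) 0
        fun y hy v => ?_
      simp [hW0 y hy.2]
    · exact hasConstantCoefficientsFormAt_of_apply_ne_zero hU hω halt hx hne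
end

section
/- Let V be a smooth q-vector field on an open set U ⊆ ℝⁿ having constant coefficients on a neighbourhood of a point x ∈ U. Then there exist an open neighbourhood W of x, an integer k ≥ 0, and smooth closed 1-forms ζ¹,…,ζᵏ on W such that for every y ∈ W the covectors ζ¹_y,…,ζᵏ_y form a basis of the annihilator P_y = {w ∈ (ℝⁿ)* : i_wV_y = 0}; in particular dim P_y is constant on W and the Pfaffian system P is integrable. -/
/-!
In the chart `u` the annihilator of `V` is the constant subspace `annihilator c`. Pulling back a
basis `β` of it gives the forms `ζᵢ = βᵢ ∘ Du = d(βᵢ ∘ u)`, which are exact, hence closed by the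
symmetry of second derivatives; since each `Du_y` is invertible, precomposition with it carries
the basis of `annihilator c` onto a basis of `annihilator (V y)`.
-/

/-- Constant coefficients for a `q`-vector field (see context): there are an open
neighbourhood `W ⊆ U` of `x`, a `C^∞` diffeomorphism `u` from `W` onto an open
subset of `ℝⁿ` and a constant `q`-vector `c` with `Λ^q(Du_y)(V_y) = c` on `W`,
i.e. `c (w₁, …, w_q) = V_y (w₁ ∘ Du_y, …, w_q ∘ Du_y)` for all covectors `wᵢ`. -/
def HasConstantCoefficientsVecAt (n q : ℕ) (U : Set (Fin n → ℝ))
    (V : (Fin n → ℝ) → (((Fin n → ℝ) →L[ℝ] ℝ) [×q]→L[ℝ] ℝ)) (x : Fin n → ℝ) : Prop :=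
  ∃ W : Set (Fin n → ℝ), IsOpen W ∧ x ∈ W ∧ W ⊆ U ∧
    ∃ u : (Fin n → ℝ) → (Fin n → ℝ),
      ContDiffOn ℝ (⊤ : ℕ∞) u W ∧ Set.InjOn u W ∧ IsOpen (u '' W) ∧
      (∀ y ∈ W, Function.Bijective (fderiv ℝ u y)) ∧
      ∃ c : ((Fin n → ℝ) →L[ℝ] ℝ) [×q]→L[ℝ] ℝ,
        ∀ y ∈ W, ∀ w : Fin q → ((Fin n → ℝ) →L[ℝ] ℝ),
          c w = V y (fun i => (w i).comp (fderiv ℝ u y))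

/-- The annihilator `P = {w ∈ (ℝⁿ)* : i_w V = 0}` of a (`q+1`)-vector,
as a subspace of the dual space. -/
noncomputable def annihilator (n q : ℕ) (V : ((Fin n → ℝ) →L[ℝ] ℝ) [×(q + 1)]→L[ℝ] ℝ) :
    Submodule ℝ ((Fin n → ℝ) →L[ℝ] ℝ) where
  carrier := {w | ∀ ws : Fin q → ((Fin n → ℝ) →L[ℝ] ℝ), V (Fin.cons w ws) = 0}
  zero_mem' := fun ws => V.map_coord_zero 0 (by simp)
  add_mem' := by
    intro a b ha hb ws
    have h : Fin.cons (a + b) ws = Function.update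
        (Fin.cons a ws : Fin (q + 1) → ((Fin n → ℝ) →L[ℝ] ℝ)) (0 : Fin (q + 1))
        (a + b) := by
      simp [Fin.update_cons_zero]
    have ha' : Fin.cons a ws = Function.update
        (Fin.cons a ws : Fin (q + 1) → ((Fin n → ℝ) →L[ℝ] ℝ)) (0 : Fin (q + 1)) a := by
      simp [Fin.update_cons_zero]
    have hb' : Fin.cons b ws = Function.update
        (Fin.cons a ws : Fin (q + 1) → ((Fin n → ℝ) →L[ℝ] ℝ)) (0 : Fin (q + 1)) b := by
      simp [Fin.update_cons_zero]
    rw [h, V.map_update_add, ← ha', ← hb', ha ws, hb ws, add_zero]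
  smul_mem' := by
    intro c a ha ws
    have h : Fin.cons (c • a) ws = Function.update
        (Fin.cons a ws : Fin (q + 1) → ((Fin n → ℝ) →L[ℝ] ℝ)) (0 : Fin (q + 1))
        (c • a) := by
      simp [Fin.update_cons_zero]
    have ha' : Fin.cons a ws = Function.update
        (Fin.cons a ws : Fin (q + 1) → ((Fin n → ℝ) →L[ℝ] ℝ)) (0 : Fin (q + 1)) a := by
      simp [Fin.update_cons_zero]
    rw [h, V.map_update_smul, ← ha', ha ws, smul_zero]

theorem Submodule.exists_linearIndependent_fin_span_eq {K M : Type*} [DivisionRing K]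
    [AddCommGroup M] [Module K M] [FiniteDimensional K M] (P : Submodule K M) :
    ∃ (k : ℕ) (β : Fin k → M), LinearIndependent K β ∧ Submodule.span K (Set.range β) = P := by
  let b := Module.finBasis K P
  refine ⟨_, P.subtype ∘ b, b.linearIndependent.map' _ P.ker_subtype, ?_⟩
  rw [Set.range_comp, Submodule.span_image, b.span_eq, Submodule.map_top, Submodule.range_subtype]

theorem ContinuousLinearMap.precomp_injective {𝕜 E F G : Type*} [NontriviallyNormedField 𝕜]
    [NormedAddCommGroup E] [NormedSpace 𝕜 E] [NormedAddCommGroup F] [NormedSpace 𝕜 F]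
    [NormedAddCommGroup G] [NormedSpace 𝕜 G] {L : E →L[𝕜] F} (hL : Function.Surjective L) :
    Function.Injective (ContinuousLinearMap.precomp (τ := RingHom.id 𝕜) G L) := fun _ _ hfg =>
  ContinuousLinearMap.ext <| hL.forall.2 fun v => congrArg (· v) hfg

theorem fderiv_clm_comp_fderiv_apply_comm {𝕜 E F G : Type*} [RCLike 𝕜]
    [NormedAddCommGroup E] [NormedSpace 𝕜 E] [NormedAddCommGroup F] [NormedSpace 𝕜 F]
    [NormedAddCommGroup G] [NormedSpace 𝕜 G] {u : E → F} {y : E} (hu : ContDiffAt 𝕜 2 u y)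
    (β : F →L[𝕜] G) (v₀ v₁ : E) :
    fderiv 𝕜 (fun z => β.comp (fderiv 𝕜 u z)) y v₀ v₁ =
      fderiv 𝕜 (fun z => β.comp (fderiv 𝕜 u z)) y v₁ v₀ := by
  have hdiff : DifferentiableAt 𝕜 (fderiv 𝕜 u) y :=
    (hu.fderiv_right (m := 1) (by norm_num)).differentiableAt one_ne_zero
  have hsymm : IsSymmSndFDerivAt 𝕜 u y := hu.isSymmSndFDerivAt (by simp)
  rw [fderiv_clm_comp (differentiableAt_const β) hdiff]
  simp [hsymm v₀ v₁]

theorem annihilator_eq_map_precomp {n q : ℕ} {c V : ((Fin n → ℝ) →L[ℝ] ℝ) [×(q + 1)]→L[ℝ] ℝ}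
    {A : (Fin n → ℝ) →L[ℝ] (Fin n → ℝ)} (hA : Function.Bijective A)
    (hcV : ∀ w, c w = V fun i => (w i).comp A) :
    annihilator n q V =
      (annihilator n q c).map (ContinuousLinearMap.precomp (τ := RingHom.id ℝ) ℝ A).toLinearMap := by
  let e := ContinuousLinearEquiv.ofBijective A (LinearMap.ker_eq_bot.2 hA.1)
    (LinearMap.range_eq_top.2 hA.2)
  let B : (Fin n → ℝ) →L[ℝ] (Fin n → ℝ) := e.symm
  have comp_inv_comp (f : (Fin n → ℝ) →L[ℝ] ℝ) : (f.comp B).comp A = f := by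
    ext v
    simp [B, e]
  have cons_comp (g ws) : c (Fin.cons g ws) = V (Fin.cons (g.comp A) fun j => (ws j).comp A) :=
    (hcV _).trans (congrArg V (Fin.comp_cons (fun f : (Fin n → ℝ) →L[ℝ] ℝ => f.comp A) g ws))
  ext w
  constructor
  · intro hw
    refine ⟨w.comp B, fun ws => ?_, comp_inv_comp w⟩
    rw [cons_comp, comp_inv_comp]
    exact hw _
  · rintro ⟨g, hg, rfl⟩ ws
    have hcons := cons_comp g fun j => (ws j).comp B
    simp only [comp_inv_comp] at hcons
    change V (Fin.cons (g.comp A) ws) = 0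
    rw [← hcons]
    exact hg _

theorem constantCoefficientsVec_annihilator_integrable_general (n q : ℕ)
    (U : Set (Fin n → ℝ))
    (V : (Fin n → ℝ) → (((Fin n → ℝ) →L[ℝ] ℝ) [×(q + 1)]→L[ℝ] ℝ))
    (x : Fin n → ℝ)
    (hcc : HasConstantCoefficientsVecAt n (q + 1) U V x) :
    ∃ W : Set (Fin n → ℝ), IsOpen W ∧ x ∈ W ∧ W ⊆ U ∧
      ∃ k : ℕ, ∃ ζ : Fin k → (Fin n → ℝ) → ((Fin n → ℝ) →L[ℝ] ℝ),
        (∀ i, ContDiffOn ℝ (⊤ : ℕ∞) (ζ i) W) ∧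
        (∀ i, ∀ y ∈ W, ∀ v₀ v₁ : Fin n → ℝ,
          fderiv ℝ (ζ i) y v₀ v₁ = fderiv ℝ (ζ i) y v₁ v₀) ∧
        (∀ y ∈ W, LinearIndependent ℝ (fun i => ζ i y) ∧
          Submodule.span ℝ (Set.range fun i => ζ i y) = annihilator n q (V y)) := by
  obtain ⟨W, hWo, hxW, hWU, u, hu, -, -, hbij, c, hc⟩ := hcc
  obtain ⟨k, β, hβ, hβc⟩ := (annihilator n q c).exists_linearIndependent_fin_span_eq
  refine ⟨W, hWo, hxW, hWU, k, fun i y => (β i).comp (fderiv ℝ u y), fun i => ?_,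
    fun i y hy => ?_, fun y hy => ⟨?_, ?_⟩⟩
  · exact contDiffOn_const.clm_comp ((contDiffOn_infty_iff_fderiv_of_isOpen hWo).1 hu).2
  · exact fderiv_clm_comp_fderiv_apply_comm
      ((hu.contDiffAt (hWo.mem_nhds hy)).of_le (WithTop.coe_le_coe.2 le_top)) (β i)
  · exact hβ.map' (ContinuousLinearMap.precomp (τ := RingHom.id ℝ) ℝ (fderiv ℝ u y)).toLinearMap
      (LinearMap.ker_eq_bot.2 (ContinuousLinearMap.precomp_injective (hbij y hy).2))
  · rw [annihilator_eq_map_precomp (hbij y hy) (hc y hy), ← hβc, Submodule.map_span,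
      ← Set.range_comp]
    rfl

/-- if a smooth (`q+1`)-vector field has constant coefficients near
`x ∈ U`, then there are an open neighbourhood `W` of `x`, `k ≥ 0` and smooth closed
`1`-forms `ζ¹, …, ζᵏ` on `W` whose values at every `y ∈ W` form a basis of the
annihilator `P_y = {w : i_w V_y = 0}`. -/
theorem constantCoefficientsVec_annihilator_integrable (n q : ℕ)
    (U : Set (Fin n → ℝ)) (hU : IsOpen U)
    (V : (Fin n → ℝ) → (((Fin n → ℝ) →L[ℝ] ℝ) [×(q + 1)]→L[ℝ] ℝ))
    (hV : ContDiffOn ℝ (⊤ : ℕ∞) V U)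
    (halt : ∀ y ∈ U, ∀ w : Fin (q + 1) → ((Fin n → ℝ) →L[ℝ] ℝ), ∀ i j, i ≠ j →
      w i = w j → V y w = 0)
    (x : Fin n → ℝ) (hx : x ∈ U)
    (hcc : HasConstantCoefficientsVecAt n (q + 1) U V x) :
    ∃ W : Set (Fin n → ℝ), IsOpen W ∧ x ∈ W ∧ W ⊆ U ∧
      ∃ k : ℕ, ∃ ζ : Fin k → (Fin n → ℝ) → ((Fin n → ℝ) →L[ℝ] ℝ),
        (∀ i, ContDiffOn ℝ (⊤ : ℕ∞) (ζ i) W) ∧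
        (∀ i, ∀ y ∈ W, ∀ v₀ v₁ : Fin n → ℝ,
          fderiv ℝ (ζ i) y v₀ v₁ = fderiv ℝ (ζ i) y v₁ v₀) ∧
        (∀ y ∈ W, LinearIndependent ℝ (fun i => ζ i y) ∧
          Submodule.span ℝ (Set.range fun i => ζ i y) = annihilator n q (V y)) :=
  constantCoefficientsVec_annihilator_integrable_general n q U V x hcc
end

section
/- Let V be a smooth bivector (2-vector) field on an open set U ⊆ ℝⁿ with components V^{ij}(y) = V_y(εⁱ,εʲ), where (εⁱ) is the dual basis of the standard basis of ℝⁿ. If V has constant coefficients on a neighbourhood of x ∈ U, then its Schouten–Nijenhuis bracket with itself vanishes there: for all indices i,j,k, the identity Σ_{l=1}^{n} ( V^{li} ∂V^{jk}/∂x^l + V^{lj} ∂V^{ki}/∂x^l + V^{lk} ∂V^{ij}/∂x^l ) = 0 holds on a neighbourhood of x. -/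
/-!
Let `X_s = (Du)⁻¹ e_s` be the coordinate vector fields of the chart `u`. Near `x`,
`V = ∑ c_{sw} X_s ⊗ X_w` with a constant antisymmetric matrix `c`, and the `X_s` commute:
`[X_s, X_a] = (Du)⁻¹ (D²u (X_a, X_s) - D²u (X_s, X_a)) = 0`.
By the product rule and antisymmetry of `c`, `∑_l V^{li} ∂_l V^{jk} = P i j k - P i k j` with
`P i j k = ∑ (c X)_s^i (X_s ⬝ ∇ X_a)^j (c X)_a^k`. As `X_s ⬝ ∇ X_a` is symmetric in `s, a`,
`P` is symmetric in `i, k`, and the cyclic sum cancels.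
-/

open ContinuousLinearMap

/-- Components of the 2-tensor `∑ c_{sw} X_s ⊗ Y_w`. -/
def frameBivector {ι κ R : Type*} [Fintype ι] [CommRing R] (c : ι → ι → R) (X Y : ι → κ → R)
    (i j : κ) : R :=
  ∑ s, ∑ w, c s w * X s i * Y w j

section FrameBivector

variable {ι κ R : Type*} [Fintype ι] [CommRing R]

theorem frameBivector_swap {c : ι → ι → R} (hc : ∀ s w, c w s = -c s w) (X Y : ι → κ → R)
    (i j : κ) : frameBivector c X Y i j = -frameBivector c Y X j i := by
  unfold frameBivector
  rw [Finset.sum_comm, ← Finset.sum_neg_distrib]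
  refine Finset.sum_congr rfl fun w _ => ?_
  rw [← Finset.sum_neg_distrib]
  refine Finset.sum_congr rfl fun s _ => ?_
  rw [hc]
  ring

theorem frameBivector_eq_sum_mul_sum (c : ι → ι → R) (X Y : ι → κ → R) (i j : κ) :
    frameBivector c X Y i j = ∑ s, X s i * ∑ w, c s w * Y w j := by
  simp only [frameBivector, Finset.mul_sum]
  exact Finset.sum_congr rfl fun s _ => Finset.sum_congr rfl fun w _ => by ring

variable [Fintype κ]

theorem sum_frameBivector_mul (c : ι → ι → R) (X Y : ι → κ → R) (i : κ) (f : κ → R) :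
    ∑ l, frameBivector c X Y l i * f l = ∑ s, (∑ l, X s l * f l) * ∑ w, c s w * Y w i := by
  simp only [frameBivector_eq_sum_mul_sum, Finset.sum_mul]
  rw [Finset.sum_comm]
  exact Finset.sum_congr rfl fun s _ => Finset.sum_congr rfl fun l _ => by ring

theorem sum_mul_frameBivector (c : ι → ι → R) (Y : ι → κ → R) (j k : κ) (x : κ → R)
    (Z : κ → ι → κ → R) :
    ∑ l, x l * frameBivector c (Z l) Y j k =
      frameBivector c (fun a j => ∑ l, x l * Z l a j) Y j k := by
  simp only [frameBivector, Finset.mul_sum, Finset.sum_mul]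
  rw [Finset.sum_comm]
  refine Finset.sum_congr rfl fun a _ => ?_
  rw [Finset.sum_comm]
  exact Finset.sum_congr rfl fun w _ => Finset.sum_congr rfl fun l _ => by ring

theorem sum_sum_mul_comm_of_symm {T : κ → κ → R} (hT : ∀ s a, T s a = T a s) (x y : κ → R) :
    ∑ s, (∑ a, T s a * x a) * y s = ∑ s, (∑ a, T s a * y a) * x s := by
  simp only [Finset.sum_mul]
  rw [Finset.sum_comm]
  exact Finset.sum_congr rfl fun s _ => Finset.sum_congr rfl fun a _ => by rw [hT]; ring

/-- `dX l a j` plays the role of `∂_l X_a^j`, and `hcomm` says `[X_s, X_a] = 0`. -/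
theorem schouten_frameBivector_eq_zero {c : ι → ι → R} (hc : ∀ s w, c w s = -c s w)
    (X : ι → κ → R) (dX : κ → ι → κ → R)
    (hcomm : ∀ s a j, ∑ l, X s l * dX l a j = ∑ l, X a l * dX l s j) (i j k : κ) :
    ∑ l, (frameBivector c X X l i *
          (frameBivector c (dX l) X j k + frameBivector c X (dX l) j k) +
        frameBivector c X X l j *
          (frameBivector c (dX l) X k i + frameBivector c X (dX l) k i) +
        frameBivector c X X l k *
          (frameBivector c (dX l) X i j + frameBivector c X (dX l) i j)) = 0 := by
  set P : κ → κ → κ → R :=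
    fun i j k => ∑ l, frameBivector c X X l i * frameBivector c (dX l) X j k
  have hP : ∀ i j k, P i j k = P k j i := fun i j k => by
    simp only [P, sum_frameBivector_mul, sum_mul_frameBivector]
    simp only [frameBivector_eq_sum_mul_sum]
    exact sum_sum_mul_comm_of_symm (T := fun s a => ∑ l, X s l * dX l a j) (hcomm · · j) _ _
  have hterm : ∀ i j k, ∑ l, frameBivector c X X l i *
      (frameBivector c (dX l) X j k + frameBivector c X (dX l) j k) = P i j k - P i k j :=
    fun i j k => by
      simp only [P, frameBivector_swap hc X (dX _) j k, mul_add, mul_neg,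
        Finset.sum_add_distrib, Finset.sum_neg_distrib, sub_eq_add_neg]
  simp only [Finset.sum_add_distrib, hterm]
  linear_combination hP i j k + hP j k i + hP k i j

end FrameBivector

theorem ContinuousMultilinearMap.map_vecCons_sum_smul {R M N ι : Type*} [CommSemiring R]
    [AddCommMonoid M] [Module R M] [TopologicalSpace M] [AddCommMonoid N] [Module R N]
    [TopologicalSpace N] [Fintype ι] (c : ContinuousMultilinearMap R (fun _ : Fin 2 => M) N)
    (a b : ι → R) (m : ι → M) :
    c ![∑ s, a s • m s, ∑ w, b w • m w] = ∑ s, ∑ w, (a s * b w) • c ![m s, m w] := by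
  classical
  have h := c.map_sum (fun i s => ![a, b] i s • m s)
  have hl : (fun i => ∑ s, ![a, b] i s • m s) = ![∑ s, a s • m s, ∑ w, b w • m w] := by
    ext i; fin_cases i <;> rfl
  rw [hl] at h
  rw [h, ← (piFinTwoEquiv fun _ => ι).symm.sum_comp, Fintype.sum_prod_type]
  refine Finset.sum_congr rfl fun s _ => Finset.sum_congr rfl fun w _ => ?_
  have hprod : a s * b w = ∏ i, ![a s, b w] i := by simp
  rw [hprod, ← c.map_smul_univ]
  congr 1
  ext i; fin_cases i <;> rfl

theorem ContinuousMultilinearMap.map_vecCons_swap {R M N : Type*} [CommRing R]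
    [AddCommGroup M] [Module R M] [TopologicalSpace M] [AddCommGroup N] [Module R N]
    [TopologicalSpace N] (c : ContinuousMultilinearMap R (fun _ : Fin 2 => M) N)
    (hc : ∀ v i j, v i = v j → i ≠ j → c v = 0) (m m' : M) : c ![m', m] = -c ![m, m'] := by
  let f : M [⋀^Fin 2]→ₗ[R] N := ⟨c.toMultilinearMap, hc⟩
  have h := f.map_swap ![m, m'] zero_ne_one
  have hv : ![m, m'] ∘ Equiv.swap 0 1 = ![m', m] := by
    ext i; fin_cases i <;> rfl
  rwa [hv] at h

section Coordinates

variable {ι : Type*} [Fintype ι] [DecidableEq ι]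

theorem ContinuousLinearMap.sum_smul_apply_single {F : Type*} [AddCommMonoid F] [Module ℝ F]
    [TopologicalSpace F] (T : (ι → ℝ) →L[ℝ] F) (v : ι → ℝ) :
    ∑ l, v l • T (Pi.single l 1) = T v := by
  conv_rhs => rw [pi_eq_sum_univ' v]
  simp [map_sum, map_smul]

theorem ContinuousLinearMap.sum_mul_apply_single_apply {κ : Type*}
    (T : (ι → ℝ) →L[ℝ] (κ → ℝ)) (v : ι → ℝ) (j : κ) :
    ∑ l, v l * T (Pi.single l 1) j = T v j := by
  simp [← T.sum_smul_apply_single v, Finset.sum_apply]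

theorem ContinuousLinearMap.eq_sum_smul_proj (φ : (ι → ℝ) →L[ℝ] ℝ) :
    φ = ∑ s, φ (Pi.single s 1) • proj s := by
  ext v
  simp [← φ.sum_smul_apply_single v, mul_comm]

theorem map_comp_proj_eq_frameBivector {κ : Type*} (c : ((ι → ℝ) →L[ℝ] ℝ) [×2]→L[ℝ] ℝ)
    (B : (ι → ℝ) →L[ℝ] (κ → ℝ)) (p q : κ) :
    c ![(proj p).comp B, (proj q).comp B] =
      frameBivector (fun s w => c ![proj s, proj w]) (fun s => B (Pi.single s 1))
        (fun s => B (Pi.single s 1)) p q := by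
  rw [((proj p).comp B).eq_sum_smul_proj, ((proj q).comp B).eq_sum_smul_proj,
    c.map_vecCons_sum_smul]
  unfold frameBivector
  exact Finset.sum_congr rfl fun s _ => Finset.sum_congr rfl fun w _ => by
    simp only [comp_apply, proj_apply, smul_eq_mul]; ring

theorem map_proj_eq_frameBivector_ringInverse {c V : ((ι → ℝ) →L[ℝ] ℝ) [×2]→L[ℝ] ℝ}
    {A : (ι → ℝ) →L[ℝ] (ι → ℝ)} (hc : ∀ w, c w = V (fun i => (w i).comp A)) (hA : IsUnit A)
    (p q : ι) :
    V ![proj p, proj q] =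
      frameBivector (fun s w => c ![proj s, proj w]) (fun s => Ring.inverse A (Pi.single s 1))
        (fun s => Ring.inverse A (Pi.single s 1)) p q := by
  rw [← map_comp_proj_eq_frameBivector, hc]
  congr 1
  ext1 i
  fin_cases i <;>
    simp [comp_assoc, ← mul_def, Ring.inverse_mul_cancel A hA, one_def]

end Coordinates

section InverseJacobian

variable {E : Type*} [NormedAddCommGroup E] [NormedSpace ℝ E] [CompleteSpace E]

theorem hasFDerivAt_ringInverse_fderiv {u : E → E} {y : E} (hu : ContDiffAt ℝ 2 u y)
    (hA : IsUnit (fderiv ℝ u y)) :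
    HasFDerivAt (fun z => Ring.inverse (fderiv ℝ u z))
      ((-mulLeftRight ℝ (E →L[ℝ] E) (Ring.inverse (fderiv ℝ u y))
        (Ring.inverse (fderiv ℝ u y))).comp (fderiv ℝ (fderiv ℝ u) y)) y := by
  obtain ⟨A, hA⟩ := hA
  have hdiff : DifferentiableAt ℝ (fderiv ℝ u) y :=
    (hu.fderiv_right (m := 1) (by norm_num)).differentiableAt one_ne_zero
  have hinv := hasFDerivAt_ringInverse (𝕜 := ℝ) A
  rw [← Ring.inverse_unit, hA] at hinv
  exact hinv.comp y hdiff.hasFDerivAt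

theorem differentiableAt_ringInverse_fderiv_apply {u : E → E} {y : E}
    (hu : ContDiffAt ℝ 2 u y) (hA : IsUnit (fderiv ℝ u y)) (v : E) :
    DifferentiableAt ℝ (fun z => Ring.inverse (fderiv ℝ u z) v) y :=
  ((hasFDerivAt_ringInverse_fderiv hu hA).clm_apply (hasFDerivAt_const v y)).differentiableAt

theorem lieBracket_ringInverse_fderiv_eq_zero {u : E → E} {y : E} (hu : ContDiffAt ℝ 2 u y)
    (hA : IsUnit (fderiv ℝ u y)) (v w : E) :
    VectorField.lieBracket ℝ (fun z => Ring.inverse (fderiv ℝ u z) v)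
      (fun z => Ring.inverse (fderiv ℝ u z) w) y = 0 := by
  have hR := hasFDerivAt_ringInverse_fderiv hu hA
  have hsymm := hu.isSymmSndFDerivAt (by simp)
  rw [VectorField.lieBracket, (hR.clm_apply (hasFDerivAt_const v y)).fderiv,
    (hR.clm_apply (hasFDerivAt_const w y)).fderiv]
  simp [hsymm.eq]

end InverseJacobian

theorem sum_mul_fderiv_ringInverse_fderiv_comm {ι : Type*} [Fintype ι] [DecidableEq ι]
    {u : (ι → ℝ) → (ι → ℝ)} {y : ι → ℝ} (hu : ContDiffAt ℝ 2 u y)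
    (hA : IsUnit (fderiv ℝ u y)) (s a j : ι) :
    ∑ l, Ring.inverse (fderiv ℝ u y) (Pi.single s 1) l *
        fderiv ℝ (fun z => Ring.inverse (fderiv ℝ u z) (Pi.single a 1)) y (Pi.single l 1) j =
      ∑ l, Ring.inverse (fderiv ℝ u y) (Pi.single a 1) l *
        fderiv ℝ (fun z => Ring.inverse (fderiv ℝ u z) (Pi.single s 1)) y (Pi.single l 1) j := by
  have hbracket := lieBracket_ringInverse_fderiv_eq_zero hu hA (Pi.single s 1) (Pi.single a 1)
  rw [VectorField.lieBracket, sub_eq_zero] at hbracket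
  rw [sum_mul_apply_single_apply, sum_mul_apply_single_apply]
  exact congrFun hbracket j

theorem fderiv_frameBivector_apply {E ι κ : Type*} [NormedAddCommGroup E] [NormedSpace ℝ E]
    [Fintype ι] (c : ι → ι → ℝ) {X : ι → E → κ → ℝ} {y : E}
    (hX : ∀ s, DifferentiableAt ℝ (X s) y) (i j : κ) (v : E) :
    fderiv ℝ (fun z => frameBivector c (fun s => X s z) (fun s => X s z) i j) y v =
      frameBivector c (fun s => fderiv ℝ (X s) y v) (fun s => X s y) i j +
        frameBivector c (fun s => X s y) (fun s => fderiv ℝ (X s) y v) i j := by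
  have hXi : ∀ s i, HasFDerivAt (fun z => X s z i) ((proj i).comp (fderiv ℝ (X s) y)) y :=
    fun s => hasFDerivAt_pi'.1 (hX s).hasFDerivAt
  have hsum : HasFDerivAt (fun z => frameBivector c (fun s => X s z) (fun s => X s z) i j)
      (∑ s, ∑ w, c s w • (X s y i • (proj j).comp (fderiv ℝ (X w) y) +
        X w y j • (proj i).comp (fderiv ℝ (X s) y))) y := by
    unfold frameBivector
    refine HasFDerivAt.fun_sum fun s _ => HasFDerivAt.fun_sum fun w _ => ?_
    simp_rw [mul_assoc]
    exact ((hXi s i).mul (hXi w j)).const_mul (c s w)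
  rw [hsum.fderiv]
  simp only [frameBivector, ← Finset.sum_add_distrib, FunLike.coe_sum, Finset.sum_apply,
    add_apply, smul_apply, comp_apply, proj_apply, smul_eq_mul]
  exact Finset.sum_congr rfl fun s _ => Finset.sum_congr rfl fun w _ => by ring

theorem constantCoefficients_schouten_self_zero_general (n : ℕ)
    (U : Set (Fin n → ℝ))
    (V : (Fin n → ℝ) → (((Fin n → ℝ) →L[ℝ] ℝ) [×2]→L[ℝ] ℝ))
    (halt : ∀ y ∈ U, ∀ w : Fin 2 → ((Fin n → ℝ) →L[ℝ] ℝ), ∀ i j, i ≠ j → w i = w j →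
      V y w = 0)
    (x : Fin n → ℝ)
    (hcc : HasConstantCoefficientsVecAt n 2 U V x)
    (Vc : Fin n → Fin n → (Fin n → ℝ) → ℝ)
    (hVc : ∀ i j y, Vc i j y =
      V y ![ContinuousLinearMap.proj i, ContinuousLinearMap.proj j]) :
    ∃ W : Set (Fin n → ℝ), IsOpen W ∧ x ∈ W ∧
      ∀ y ∈ W, ∀ i j k : Fin n,
        ∑ l : Fin n,
          (Vc l i y * fderiv ℝ (Vc j k) y (Pi.single l 1) +
           Vc l j y * fderiv ℝ (Vc k i) y (Pi.single l 1) +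
           Vc l k y * fderiv ℝ (Vc i j) y (Pi.single l 1)) = 0 := by
  obtain ⟨W, hWo, hxW, hWU, u, hu, -, -, hbij, c, hc⟩ := hcc
  refine ⟨W, hWo, hxW, fun y hy i j k => ?_⟩
  have hu2 : ContDiffAt ℝ 2 u y := (hu.contDiffAt (hWo.mem_nhds hy)).of_le (by norm_cast)
  have hunit : ∀ z ∈ W, IsUnit (fderiv ℝ u z) := fun z hz => isUnit_iff_bijective.2 (hbij z hz)
  set X : Fin n → (Fin n → ℝ) → Fin n → ℝ :=
    fun s z => Ring.inverse (fderiv ℝ u z) (Pi.single s 1)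
  set cc : Fin n → Fin n → ℝ := fun s w => c ![proj s, proj w]
  have hanti : ∀ s w, cc w s = -cc s w := fun s w =>
    c.map_vecCons_swap (fun v i j hv hij => by
      rw [hc y hy]; exact halt y (hWU hy) _ i j hij (by rw [hv])) _ _
  have hVcW : ∀ p q, ∀ z ∈ W, Vc p q z = frameBivector cc (X · z) (X · z) p q :=
    fun p q z hz =>
      (hVc p q z).trans (map_proj_eq_frameBivector_ringInverse (hc z hz) (hunit z hz) p q)
  have hderiv : ∀ p q l, fderiv ℝ (Vc p q) y (Pi.single l 1) =
      frameBivector cc (fun s => fderiv ℝ (X s) y (Pi.single l 1)) (X · y) p q +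
        frameBivector cc (X · y) (fun s => fderiv ℝ (X s) y (Pi.single l 1)) p q := fun p q l => by
    rw [(Filter.eventuallyEq_of_mem (hWo.mem_nhds hy) (hVcW p q)).fderiv_eq,
      fderiv_frameBivector_apply cc
        (fun s => differentiableAt_ringInverse_fderiv_apply hu2 (hunit y hy) _)]
  simp only [hderiv, hVcW _ _ y hy]
  exact schouten_frameBivector_eq_zero hanti (X · y) (fun l s => fderiv ℝ (X s) y (Pi.single l 1))
    (sum_mul_fderiv_ringInverse_fderiv_comm hu2 (hunit y hy)) i j k

/-- if a smooth bivector field `V` (with components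
`V^{ij}(y) = V_y(εⁱ, εʲ)`) has constant coefficients near `x`, then its
Schouten–Nijenhuis bracket with itself vanishes near `x`:
`Σ_l ( V^{li} ∂_l V^{jk} + V^{lj} ∂_l V^{ki} + V^{lk} ∂_l V^{ij} ) = 0`. -/
theorem constantCoefficients_schouten_self_zero (n : ℕ)
    (U : Set (Fin n → ℝ)) (hU : IsOpen U)
    (V : (Fin n → ℝ) → (((Fin n → ℝ) →L[ℝ] ℝ) [×2]→L[ℝ] ℝ))
    (hV : ContDiffOn ℝ (⊤ : ℕ∞) V U)
    (halt : ∀ y ∈ U, ∀ w : Fin 2 → ((Fin n → ℝ) →L[ℝ] ℝ), ∀ i j, i ≠ j → w i = w j →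
      V y w = 0)
    (x : Fin n → ℝ) (hx : x ∈ U)
    (hcc : HasConstantCoefficientsVecAt n 2 U V x)
    (Vc : Fin n → Fin n → (Fin n → ℝ) → ℝ)
    (hVc : ∀ i j y, Vc i j y =
      V y ![ContinuousLinearMap.proj i, ContinuousLinearMap.proj j]) :
    ∃ W : Set (Fin n → ℝ), IsOpen W ∧ x ∈ W ∧
      ∀ y ∈ W, ∀ i j k : Fin n,
        ∑ l : Fin n,
          (Vc l i y * fderiv ℝ (Vc j k) y (Pi.single l 1) +
           Vc l j y * fderiv ℝ (Vc k i) y (Pi.single l 1) +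
           Vc l k y * fderiv ℝ (Vc i j) y (Pi.single l 1)) = 0 :=
  constantCoefficients_schouten_self_zero_general n U V halt x hcc Vc hVc
end

section
/- Let n ≥ 2 and let V be a smooth (n−1)-vector field on an open set U ⊆ ℝⁿ with V_{x₀} ≠ 0 at a point x₀ ∈ U. Suppose that on some neighbourhood of x₀ there exists a closed nowhere-vanishing smooth 1-form ζ such that for every y one has {w ∈ (ℝⁿ)* : i_wV_y = 0} = ℝ·ζ_y. Then V has conformal constant coefficients on a neighbourhood of x₀. -/
/-- Conformal constant coefficients for a `q`-vector field: `V = f·V′` near `x` for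
some smooth function `f` and some `q`-vector field `V′` with constant coefficients
on a neighbourhood of `x`. -/
def HasConformalConstantCoefficientsVecAt (n q : ℕ) (U : Set (Fin n → ℝ))
    (V : (Fin n → ℝ) → (((Fin n → ℝ) →L[ℝ] ℝ) [×q]→L[ℝ] ℝ)) (x : Fin n → ℝ) : Prop :=
  ∃ W : Set (Fin n → ℝ), IsOpen W ∧ x ∈ W ∧ W ⊆ U ∧
    ∃ f : (Fin n → ℝ) → ℝ, ContDiffOn ℝ (⊤ : ℕ∞) f W ∧
      ∃ V' : (Fin n → ℝ) → (((Fin n → ℝ) →L[ℝ] ℝ) [×q]→L[ℝ] ℝ),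
        HasConstantCoefficientsVecAt n q Set.univ V' x ∧
        ∀ y ∈ W, V y = f y • V' y

/-!
Pick a coordinate `k` with `ζ_{x₀}(e_k) ≠ 0` and, by the Poincaré lemma on a small ball, a
potential `g` with `dg = ζ`. Replacing the `k`-th coordinate by `g` gives a chart `u` whose
derivative has `k`-th row `ζ` and the coordinate covectors as its other rows. Since `V` kills `ζ`,
the pulled-back `(n-1)`-vector `w ↦ V_y(w ∘ Du_y)` kills `e_k^*`, so it is `h(y)` times the fixed
`(n-1)`-vector `w ↦ det (w_i(e_j))_{j ≠ k}`, where `h(y) = V_y(e_j^*)_{j ≠ k}`. Thus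
`V = h · (h⁻¹ V)` with `h⁻¹ V` of constant coefficients, and `h(x₀) ≠ 0` because `V_{x₀} ≠ 0`.
-/

open ContinuousLinearMap Function

namespace AlternatingMap

variable {R M N : Type*} {n : ℕ}

theorem map_eq_zero_of_forall_cons_eq_zero [Semiring R] [AddCommMonoid M] [Module R M]
    [AddCommGroup N] [Module R N] (f : M [⋀^Fin (n + 1)]→ₗ[R] N) {x : M}
    (hf : ∀ ws : Fin n → M, f (Fin.cons x ws) = 0) {v : Fin (n + 1) → M} {i : Fin (n + 1)}
    (hi : v i = x) : f v = 0 := by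
  obtain rfl | hi0 := eq_or_ne i 0
  · rw [← Fin.cons_self_tail v, hi]
    exact hf _
  · have hswap := f.map_swap v hi0.symm
    rw [← Fin.cons_self_tail (v ∘ Equiv.swap 0 i)] at hswap
    simpa [hi, hf] using hswap.symm

theorem apply_eq_mul_det_succAbove [CommRing R] [AddCommGroup M] [Module R M]
    (b : Module.Basis (Fin (n + 1)) R M) (k : Fin (n + 1))
    (f : M [⋀^Fin n]→ₗ[R] R) (hf : ∀ v i, v i = b k → f v = 0) (w : Fin n → M) :
    f w = f (fun i => b (k.succAbove i)) *
      (Matrix.of fun i j => b.repr (w i) (k.succAbove j)).det := by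
  let π : M →ₗ[R] Fin n → R := LinearMap.pi fun j => b.coord (k.succAbove j)
  let s : (Fin n → R) →ₗ[R] M := (Pi.basisFun R (Fin n)).constr R fun j => b (k.succAbove j)
  have hπ (j : Fin n) : π (b (k.succAbove j)) = Pi.basisFun R (Fin n) j := by
    ext l
    simp [π, Finsupp.single_apply, Pi.single_apply, eq_comm]
  -- `f` factors through the coordinates other than the `k`-th, where it has top degree.
  have hfactor : f = (f.compLinearMap s).compLinearMap π := by
    refine b.ext_alternating fun v _ => ?_
    by_cases hk : ∃ i, v i = k
    · obtain ⟨i, hi⟩ := hk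
      rw [hf _ i (by rw [hi]), compLinearMap_apply]
      refine ((f.compLinearMap s).map_coord_zero i ?_).symm
      ext j
      simp [π, hi]
    · push Not at hk
      rw [compLinearMap_apply, compLinearMap_apply]
      congr 1
      funext i
      obtain ⟨j, hj⟩ := Fin.exists_succAbove_eq (hk i)
      rw [← hj, hπ, Module.Basis.constr_basis]
  conv_lhs => rw [hfactor, compLinearMap_apply,
    (f.compLinearMap s).eq_smul_basis_det (Pi.basisFun R (Fin n))]
  rw [smul_apply, Pi.basisFun_det_apply, compLinearMap_apply, smul_eq_mul]
  simp only [s, Module.Basis.constr_basis]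
  rfl

end AlternatingMap

def ContinuousMultilinearMap.mkAlternating {R M N : Type*} [Semiring R] [AddCommMonoid M]
    [Module R M] [TopologicalSpace M] [AddCommMonoid N] [Module R N] [TopologicalSpace N] {n : ℕ}
    (f : M [×n]→L[R] N) (hf : ∀ v i j, i ≠ j → v i = v j → f v = 0) : M [⋀^Fin n]→ₗ[R] N :=
  { f.toMultilinearMap with map_eq_zero_of_eq' := fun v i j hv hij => hf v i j hij hv }

@[simp]
theorem ContinuousMultilinearMap.mkAlternating_apply {R M N : Type*} [Semiring R]
    [AddCommMonoid M] [Module R M] [TopologicalSpace M] [AddCommMonoid N] [Module R N]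
    [TopologicalSpace N] {n : ℕ} (f : M [×n]→L[R] N) (hf : ∀ v i j, i ≠ j → v i = v j → f v = 0)
    (v : Fin n → M) : f.mkAlternating hf v = f v :=
  rfl

section UpdateRow

variable {𝕜 : Type*} [NontriviallyNormedField 𝕜] {ι : Type*} [DecidableEq ι]

variable (𝕜 ι) in
noncomputable def dualPiBasis [Fintype ι] [CompleteSpace 𝕜] :
    Module.Basis ι 𝕜 ((ι → 𝕜) →L[𝕜] 𝕜) :=
  (Pi.basisFun 𝕜 ι).dualBasis.map LinearMap.toContinuousLinearMap

@[simp]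
theorem dualPiBasis_apply [Fintype ι] [CompleteSpace 𝕜] (j : ι) : dualPiBasis 𝕜 ι j = proj j := by
  ext
  simp [dualPiBasis]

@[simp]
theorem dualPiBasis_repr_apply [Fintype ι] [CompleteSpace 𝕜] (w : (ι → 𝕜) →L[𝕜] 𝕜) (j : ι) :
    (dualPiBasis 𝕜 ι).repr w j = w (Pi.single j 1) := by
  simp [dualPiBasis]

theorem exists_apply_single_ne_zero [Fintype ι] [CompleteSpace 𝕜] {φ : (ι → 𝕜) →L[𝕜] 𝕜}
    (hφ : φ ≠ 0) : ∃ k, φ (Pi.single k 1) ≠ 0 := by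
  by_contra! h
  exact hφ ((dualPiBasis 𝕜 ι).ext_elem fun k => by simpa using h k)

noncomputable def updateRowCLM (k : ι) (φ : (ι → 𝕜) →L[𝕜] 𝕜) : (ι → 𝕜) →L[𝕜] ι → 𝕜 :=
  pi (update (fun j => (proj j : (ι → 𝕜) →L[𝕜] 𝕜)) k φ)

theorem proj_comp_updateRowCLM (k : ι) (φ : (ι → 𝕜) →L[𝕜] 𝕜) (j : ι) :
    (proj j).comp (updateRowCLM k φ) = update (fun j => (proj j : (ι → 𝕜) →L[𝕜] 𝕜)) k φ j :=
  proj_pi _ j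

theorem updateRowCLM_bijective [Fintype ι] {k : ι} {φ : (ι → 𝕜) →L[𝕜] 𝕜}
    (hφ : φ (Pi.single k 1) ≠ 0) : Bijective (updateRowCLM k φ) := by
  have hinj : Injective (updateRowCLM k φ) := by
    refine (injective_iff_map_eq_zero _).2 fun v hv => ?_
    have hcoord (i : ι) : update (fun j => (proj j : (ι → 𝕜) →L[𝕜] 𝕜)) k φ i v = 0 :=
      congrFun hv i
    have hv_single : v = Pi.single k (v k) := by
      ext i
      obtain rfl | hik := eq_or_ne i k
      · simp
      · simpa [hik] using hcoord i
    have hvk : v k * φ (Pi.single k 1) = 0 := by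
      rw [← smul_eq_mul, ← map_smul, ← Pi.single_smul, smul_eq_mul, mul_one, ← hv_single]
      simpa using hcoord k
    rw [hv_single, (mul_eq_zero.1 hvk).resolve_right hφ, Pi.single_zero]
  exact ⟨hinj, LinearMap.injective_iff_surjective.1 hinj⟩

theorem HasFDerivAt.updateCoord [Fintype ι] {g : (ι → 𝕜) → 𝕜} {φ : (ι → 𝕜) →L[𝕜] 𝕜}
    {y : ι → 𝕜} (hg : HasFDerivAt g φ y) (k : ι) :
    HasFDerivAt (fun y => update y k (g y)) (updateRowCLM k φ) y := by
  refine hasFDerivAt_pi.2 fun i => ?_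
  obtain rfl | hik := eq_or_ne i k
  · simpa using hg
  · simpa [hik] using hasFDerivAt_apply i y

theorem ContDiffOn.updateCoord [Fintype ι] {n : WithTop ℕ∞} {g : (ι → 𝕜) → 𝕜}
    {s : Set (ι → 𝕜)} (hg : ContDiffOn 𝕜 n g s) (k : ι) :
    ContDiffOn 𝕜 n (fun y => update y k (g y)) s := by
  refine contDiffOn_pi.2 fun i => ?_
  obtain rfl | hik := eq_or_ne i k
  · simpa using hg
  · simpa [hik] using (contDiff_apply 𝕜 𝕜 i).contDiffOn

variable [CompleteSpace 𝕜] {m : ℕ} (A : ((Fin (m + 2) → 𝕜) →L[𝕜] 𝕜) [×(m + 1)]→L[𝕜] 𝕜)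
  (hA : ∀ v i j, i ≠ j → v i = v j → A v = 0) {ζ : (Fin (m + 2) → 𝕜) →L[𝕜] 𝕜}
  (hζ : ∀ ws, A (Fin.cons ζ ws) = 0)
include hA hζ

theorem ContinuousMultilinearMap.apply_comp_updateRowCLM_eq_mul_det (k : Fin (m + 2))
    (w : Fin (m + 1) → (Fin (m + 2) → 𝕜) →L[𝕜] 𝕜) :
    A (fun i => (w i).comp (updateRowCLM k ζ)) = A (fun i => proj (k.succAbove i)) *
      (Matrix.of fun i j => w i (Pi.single (k.succAbove j) 1)).det := by
  let P : ((Fin (m + 2) → 𝕜) →L[𝕜] 𝕜) →L[𝕜] (Fin (m + 2) → 𝕜) →L[𝕜] 𝕜 :=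
    (compL 𝕜 _ _ 𝕜).flip (updateRowCLM k ζ)
  have := ((A.mkAlternating hA).compLinearMap P.toLinearMap).apply_eq_mul_det_succAbove
    (dualPiBasis 𝕜 _) k (fun v i hi => ?_) w
  · simpa [P, proj_comp_updateRowCLM, Fin.succAbove_ne] using this
  refine (A.mkAlternating hA).map_eq_zero_of_forall_cons_eq_zero hζ (i := i) ?_
  simp [P, hi, proj_comp_updateRowCLM]

theorem ContinuousMultilinearMap.apply_proj_succAbove_ne_zero {k : Fin (m + 2)}
    (hk : ζ (Pi.single k 1) ≠ 0) (hA0 : A ≠ 0) : (A fun i => proj (k.succAbove i)) ≠ 0 := by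
  intro h0
  apply hA0
  ext w
  let e := (LinearEquiv.ofBijective (updateRowCLM k ζ).toLinearMap
    (updateRowCLM_bijective hk)).toContinuousLinearEquiv
  have hcomp (i) : ((w i).comp (e.symm : _ →L[𝕜] _)).comp (updateRowCLM k ζ) = w i := by
    ext v
    exact congrArg (w i) (e.symm_apply_apply v)
  simpa [hcomp, h0] using
    A.apply_comp_updateRowCLM_eq_mul_det hA hζ k fun i => (w i).comp (e.symm : _ →L[𝕜] _)

end UpdateRow

theorem ContDiffOn.continuousMultilinear_apply_const {𝕜 E F ι : Type*} [NontriviallyNormedField 𝕜]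
    [NormedAddCommGroup E] [NormedSpace 𝕜 E] [NormedAddCommGroup F] [NormedSpace 𝕜 F] [Fintype ι]
    {M : ι → Type*} [∀ i, NormedAddCommGroup (M i)] [∀ i, NormedSpace 𝕜 (M i)]
    {c : E → ContinuousMultilinearMap 𝕜 M F} {s : Set E} {n : WithTop ℕ∞} (hc : ContDiffOn 𝕜 n c s)
    (u : ∀ i, M i) : ContDiffOn 𝕜 n (fun y => c y u) s :=
  (ContinuousMultilinearMap.apply 𝕜 M F u).contDiff.comp_contDiffOn hc

theorem Convex.exists_contDiffOn_forall_hasFDerivAt_of_fderiv_symmetric {E F : Type*}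
    [NormedAddCommGroup E] [NormedSpace ℝ E] [NormedAddCommGroup F] [NormedSpace ℝ F]
    [CompleteSpace F] {s : Set E} (hs : Convex ℝ s) (hso : IsOpen s) {ζ : E → E →L[ℝ] F}
    (hζ : ContDiffOn ℝ (⊤ : ℕ∞) ζ s) (hsymm : ∀ y ∈ s, ∀ a b, fderiv ℝ ζ y a b = fderiv ℝ ζ y b a) :
    ∃ g : E → F, ContDiffOn ℝ (⊤ : ℕ∞) g s ∧ ∀ y ∈ s, HasFDerivAt g (ζ y) y := by
  obtain ⟨g, hg⟩ :=
    hs.exists_forall_hasFDerivAt_of_fderiv_symmetric hso (hζ.differentiableOn (by simp)) hsymm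
  refine ⟨g, (contDiffOn_infty_iff_fderiv_of_isOpen hso).2 ⟨fun y hy => ?_, ?_⟩, hg⟩
  · exact (hg y hy).differentiableAt.differentiableWithinAt
  · exact hζ.congr fun y hy => (hg y hy).fderiv

theorem hasConstantCoefficientsVecAt_of_bijective_fderiv {n q : ℕ} {U s : Set (Fin n → ℝ)}
    {V : (Fin n → ℝ) → (((Fin n → ℝ) →L[ℝ] ℝ) [×q]→L[ℝ] ℝ)} {x : Fin n → ℝ}
    (hs : IsOpen s) (hxs : x ∈ s) (hsU : s ⊆ U) {u : (Fin n → ℝ) → Fin n → ℝ}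
    (hu : ContDiffOn ℝ (⊤ : ℕ∞) u s) (hbij : ∀ y ∈ s, Bijective (fderiv ℝ u y))
    (c : ((Fin n → ℝ) →L[ℝ] ℝ) [×q]→L[ℝ] ℝ)
    (hc : ∀ y ∈ s, ∀ w, c w = V y fun i => (w i).comp (fderiv ℝ u y)) :
    HasConstantCoefficientsVecAt n q U V x := by
  have hux : ContDiffAt ℝ (⊤ : ℕ∞) u x := hu.contDiffAt (hs.mem_nhds hxs)
  let e := (LinearEquiv.ofBijective (fderiv ℝ u x).toLinearMap (hbij x hxs)).toContinuousLinearEquiv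
  have hderiv : HasFDerivAt u (e : (Fin n → ℝ) →L[ℝ] Fin n → ℝ) x :=
    (hux.differentiableAt (by simp)).hasFDerivAt
  let Φ := hux.toOpenPartialHomeomorph u hderiv (by simp)
  refine ⟨s ∩ Φ.source, hs.inter Φ.open_source,
    ⟨hxs, hux.mem_toOpenPartialHomeomorph_source hderiv _⟩, Set.inter_subset_left.trans hsU,
    u, hu.mono Set.inter_subset_left, Φ.injOn.mono Set.inter_subset_right,
    Φ.isOpen_image_of_subset_source (hs.inter Φ.open_source) Set.inter_subset_right,
    fun y hy => hbij y hy.1, c, fun y hy => hc y hy.1⟩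

theorem hasConstantCoefficientsVecAt_of_potential {m q : ℕ}
    {V : (Fin (m + 2) → ℝ) → (((Fin (m + 2) → ℝ) →L[ℝ] ℝ) [×q]→L[ℝ] ℝ)}
    {x : Fin (m + 2) → ℝ} {s : Set (Fin (m + 2) → ℝ)} (hs : IsOpen s) (hxs : x ∈ s)
    {g : (Fin (m + 2) → ℝ) → ℝ} {ζ : (Fin (m + 2) → ℝ) → (Fin (m + 2) → ℝ) →L[ℝ] ℝ}
    (hg : ContDiffOn ℝ (⊤ : ℕ∞) g s) (hgζ : ∀ y ∈ s, HasFDerivAt g (ζ y) y) {k : Fin (m + 2)}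
    (hk : ∀ y ∈ s, ζ y (Pi.single k 1) ≠ 0) (c : ((Fin (m + 2) → ℝ) →L[ℝ] ℝ) [×q]→L[ℝ] ℝ)
    (hc : ∀ y ∈ s, ∀ w, c w = V y fun i => (w i).comp (updateRowCLM k (ζ y))) :
    HasConstantCoefficientsVecAt (m + 2) q Set.univ V x := by
  have hfderiv (y) (hy : y ∈ s) : fderiv ℝ (fun y => update y k (g y)) y = updateRowCLM k (ζ y) :=
    ((hgζ y hy).updateCoord k).fderiv
  refine hasConstantCoefficientsVecAt_of_bijective_fderiv hs hxs (Set.subset_univ _)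
    (hg.updateCoord k) (fun y hy => ?_) c fun y hy => ?_
  · exact hfderiv y hy ▸ updateRowCLM_bijective (hk y hy)
  · exact hfderiv y hy ▸ hc y hy

/-- Example 1.21: with `n = m + 2 ≥ 2`, let `V` be a smooth
`(n−1)`-vector field with `V_{x₀} ≠ 0`. If on some neighbourhood of `x₀` there is a
closed nowhere-vanishing smooth `1`-form `ζ` with `{w : i_w V_y = 0} = ℝ·ζ_y` for
every `y`, then `V` has conformal constant coefficients near `x₀`. -/
theorem codimOneVector_conformalConstantCoefficients (m : ℕ)
    (U : Set (Fin (m + 2) → ℝ)) (hU : IsOpen U)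
    (V : (Fin (m + 2) → ℝ) → (((Fin (m + 2) → ℝ) →L[ℝ] ℝ) [×(m + 1)]→L[ℝ] ℝ))
    (hV : ContDiffOn ℝ (⊤ : ℕ∞) V U)
    (halt : ∀ y ∈ U, ∀ w : Fin (m + 1) → ((Fin (m + 2) → ℝ) →L[ℝ] ℝ), ∀ i j,
      i ≠ j → w i = w j → V y w = 0)
    (x₀ : Fin (m + 2) → ℝ) (hx₀ : x₀ ∈ U) (hx0 : V x₀ ≠ 0)
    (hP : ∃ W : Set (Fin (m + 2) → ℝ), IsOpen W ∧ x₀ ∈ W ∧ W ⊆ U ∧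
      ∃ ζ : (Fin (m + 2) → ℝ) → ((Fin (m + 2) → ℝ) →L[ℝ] ℝ),
        ContDiffOn ℝ (⊤ : ℕ∞) ζ W ∧
        (∀ y ∈ W, ζ y ≠ 0) ∧
        (∀ y ∈ W, ∀ a b : Fin (m + 2) → ℝ,
          fderiv ℝ ζ y a b = fderiv ℝ ζ y b a) ∧
        (∀ y ∈ W, ∀ w : (Fin (m + 2) → ℝ) →L[ℝ] ℝ,
          (∀ ws : Fin m → ((Fin (m + 2) → ℝ) →L[ℝ] ℝ), V y (Fin.cons w ws) = 0) ↔
            (∃ t : ℝ, w = t • ζ y))) :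
    HasConformalConstantCoefficientsVecAt (m + 2) (m + 1) U V x₀ := by
  obtain ⟨W, hW, hxW, -, ζ, hζ, hζne, hζsymm, hker⟩ := hP
  obtain ⟨k, hk⟩ := exists_apply_single_ne_zero (hζne x₀ hxW)
  set h : (Fin (m + 2) → ℝ) → ℝ := fun y => V y fun i => proj (k.succAbove i)
  have hh : ContDiffOn ℝ (⊤ : ℕ∞) h U := hV.continuousMultilinear_apply_const _
  have hkills (y) (hy : y ∈ W) : ∀ ws, V y (Fin.cons (ζ y) ws) = 0 :=
    (hker y hy _).2 ⟨1, (one_smul ℝ _).symm⟩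
  have hhx : h x₀ ≠ 0 :=
    (V x₀).apply_proj_succAbove_ne_zero (halt x₀ hx₀) (hkills x₀ hxW) hk hx0
  obtain ⟨r, hr, hball⟩ := Metric.eventually_nhds_iff_ball.1 <|
    (hU.eventually_mem hx₀).and <| (hW.eventually_mem hxW).and <|
      (((hζ.continuousOn.continuousAt (hW.mem_nhds hxW)).clm_apply continuousAt_const).eventually_ne
        hk).and ((hh.continuousOn.continuousAt (hU.mem_nhds hx₀)).eventually_ne hhx)
  obtain ⟨g, hg, hgζ⟩ := (convex_ball x₀ r).exists_contDiffOn_forall_hasFDerivAt_of_fderiv_symmetric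
    Metric.isOpen_ball (hζ.mono fun y hy => (hball y hy).2.1)
    fun y hy => hζsymm y (hball y hy).2.1
  refine ⟨Metric.ball x₀ r, Metric.isOpen_ball, Metric.mem_ball_self hr,
    fun y hy => (hball y hy).1, h, hh.mono fun y hy => (hball y hy).1,
    fun y => (h y)⁻¹ • V y, ?_, fun y hy => (smul_inv_smul₀ (hball y hy).2.2.2 _).symm⟩
  refine hasConstantCoefficientsVecAt_of_potential Metric.isOpen_ball
    (Metric.mem_ball_self hr) hg hgζ (fun y hy => (hball y hy).2.2.1)
    ((h x₀)⁻¹ • (V x₀).compContinuousLinearMap fun _ =>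
      (compL ℝ _ _ ℝ).flip (updateRowCLM k (ζ x₀))) fun y hy w => ?_
  obtain ⟨hyU, hyW, -, hyh⟩ := hball y hy
  simp only [_root_.smul_apply, ContinuousMultilinearMap.compContinuousLinearMap_apply,
    flip_apply, compL_apply, smul_eq_mul,
    (V x₀).apply_comp_updateRowCLM_eq_mul_det (halt x₀ hx₀) (hkills x₀ hxW),
    (V y).apply_comp_updateRowCLM_eq_mul_det (halt y hyU) (hkills y hyW)]
  exact (inv_mul_cancel_left₀ hhx _).trans (inv_mul_cancel_left₀ hyh _).symm
end

section
/- Let V be a smooth q-vector field on an open set U ⊆ ℝⁿ (1 ≤ q ≤ n) having conformal constant coefficients on a neighbourhood of a point x ∈ U, and let ω_n be a smooth nowhere-vanishing n-form on U. Then the (n−q)-form i_Vω_n has conformal constant coefficients on a neighbourhood of x. -/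
namespace MultilinearMap

section

variable {R ι κ M N : Type*} [CommSemiring R] [Fintype ι] [DecidableEq ι] [Fintype κ]
  [AddCommMonoid M] [Module R M] [AddCommMonoid N] [Module R N]

theorem map_sum_smul (m : MultilinearMap R (fun _ : ι => M) N) (a : ι → κ → R) (x : κ → M) :
    m (fun i => ∑ k, a i k • x k) = ∑ t : ι → κ, (∏ i, a i (t i)) • m (fun i => x (t i)) := by
  rw [m.map_sum]
  simp only [m.map_smul_univ]

theorem apply_eq_sum_pi_single [DecidableEq κ] (m : MultilinearMap R (fun _ : ι => κ → R) N)
    (w : ι → κ → R) :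
    m w = ∑ t : ι → κ, (∏ i, w i (t i)) • m (fun i => Pi.single (t i) 1) := by
  conv_lhs => rw [funext fun i => pi_eq_sum_univ' (w i)]
  exact m.map_sum_smul _ _

theorem continuous_on_pi [TopologicalSpace R] [IsTopologicalSemiring R]
    [TopologicalSpace N] [ContinuousAdd N] [ContinuousSMul R N]
    (m : MultilinearMap R (fun _ : ι => κ → R) N) : Continuous m := by
  classical
  rw [funext m.apply_eq_sum_pi_single]
  fun_prop

end

section

variable {R E N : Type*} [CommSemiring R] [AddCommMonoid E] [Module R E] [AddCommMonoid N]
  [Module R N] {q r : ℕ}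

def curryAppendLeft (M : MultilinearMap R (fun _ : Fin (q + r) => E) N) (a : Fin q → E) :
    MultilinearMap R (fun _ : Fin r => E) N :=
  (M.domDomCongr finSumFinEquiv.symm).currySum a

def curryAppendRight (M : MultilinearMap R (fun _ : Fin (q + r) => E) N) (z : Fin r → E) :
    MultilinearMap R (fun _ : Fin q => E) N :=
  (M.domDomCongr (finSumFinEquiv.symm.trans (Equiv.sumComm _ _))).currySum z

@[simp]
theorem curryAppendLeft_apply (M : MultilinearMap R (fun _ : Fin (q + r) => E) N)
    (a : Fin q → E) (z : Fin r → E) : M.curryAppendLeft a z = M (Fin.append a z) := by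
  simp only [curryAppendLeft, currySum_apply', domDomCongr_apply]
  congr 1
  funext j
  refine Fin.addCases (fun i => ?_) (fun i => ?_) j <;> simp

@[simp]
theorem curryAppendRight_apply (M : MultilinearMap R (fun _ : Fin (q + r) => E) N)
    (z : Fin r → E) (a : Fin q → E) : M.curryAppendRight z a = M (Fin.append a z) := by
  simp only [curryAppendRight, currySum_apply', domDomCongr_apply]
  congr 1
  funext j
  refine Fin.addCases (fun i => ?_) (fun i => ?_) j <;> simp

end

end MultilinearMap

theorem ContinuousLinearMap.eq_sum_smul_proj_s13 {R ι : Type*} [CommSemiring R] [TopologicalSpace R]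
    [IsTopologicalSemiring R] [Fintype ι] [DecidableEq ι] (f : (ι → R) →L[R] R) :
    f = ∑ k, f (Pi.single k 1) • ContinuousLinearMap.proj k := by
  ext x
  conv_lhs => rw [pi_eq_sum_univ' x]
  simp [mul_comm]

theorem AlternatingMap.eq_smul_basis_det_compLinearMap {K M ι : Type*} [Field K]
    [AddCommGroup M] [Module K M] [Fintype ι] [DecidableEq ι] (b : Module.Basis ι K M)
    (ω : M [⋀^ι]→ₗ[K] K) {A : M →ₗ[K] M} (hA : LinearMap.det A ≠ 0) :
    ω = (ω b / LinearMap.det A) • b.det.compLinearMap A := by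
  ext v
  conv_lhs => rw [ω.eq_smul_basis_det b]
  simp only [AlternatingMap.smul_apply, AlternatingMap.compLinearMap_apply, smul_eq_mul]
  rw [show (fun i => A (v i)) = A ∘ v from rfl, b.det_comp]
  field_simp

theorem ContinuousLinearMap.contDiff_det {𝕜 ι : Type*} [NontriviallyNormedField 𝕜] [Fintype ι]
    {n : WithTop ℕ∞} : ContDiff 𝕜 n fun A : (ι → 𝕜) →L[𝕜] (ι → 𝕜) => A.det := by
  classical
  let D : ContinuousMultilinearMap 𝕜 (fun _ : ι => ι → 𝕜) 𝕜 :=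
    ⟨(Pi.basisFun 𝕜 ι).det.toMultilinearMap, MultilinearMap.continuous_on_pi _⟩
  have hdet : ∀ A : (ι → 𝕜) →L[𝕜] (ι → 𝕜), A.det = D (fun k => A (Pi.single k 1)) := fun A => by
    have h := (Pi.basisFun 𝕜 ι).det_comp A (Pi.basisFun 𝕜 ι)
    rw [Module.Basis.det_self, mul_one] at h
    rw [ContinuousLinearMap.det, ← h]
    exact congrArg (Pi.basisFun 𝕜 ι).det (funext fun k => by simp)
  rw [funext hdet]
  exact D.contDiff.comp (contDiff_pi.2 fun k => contDiff_id.clm_apply contDiff_const)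

theorem exists_contDiffOn_eq_smul_det_comp_fderiv {ι : Type*} [Fintype ι] [DecidableEq ι]
    {s : Set (ι → ℝ)} (hs : IsOpen s)
    {ω : (ι → ℝ) → ContinuousMultilinearMap ℝ (fun _ : ι => ι → ℝ) ℝ}
    (hω : ContDiffOn ℝ (⊤ : ℕ∞) ω s)
    (halt : ∀ y ∈ s, ∀ v : ι → ι → ℝ, ∀ i j, i ≠ j → v i = v j → ω y v = 0)
    {u : (ι → ℝ) → ι → ℝ} (hu : ContDiffOn ℝ (⊤ : ℕ∞) u s)
    (hbij : ∀ y ∈ s, Function.Bijective (fderiv ℝ u y)) :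
    ∃ h : (ι → ℝ) → ℝ, ContDiffOn ℝ (⊤ : ℕ∞) h s ∧ ∀ y ∈ s, (ω y).toMultilinearMap =
      h y • (Pi.basisFun ℝ ι).det.toMultilinearMap.compLinearMap
        fun _ => (fderiv ℝ u y : (ι → ℝ) →ₗ[ℝ] ι → ℝ) := by
  let b := Pi.basisFun ℝ ι
  have hJ : ∀ y ∈ s, (fderiv ℝ u y).det ≠ 0 := fun y hy =>
    (LinearMap.isUnit_det _ ((Module.End.isUnit_iff _).2 (hbij y hy))).ne_zero
  have hJ_smooth : ContDiffOn ℝ (⊤ : ℕ∞) (fun y => (fderiv ℝ u y).det) s :=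
    ContinuousLinearMap.contDiff_det.comp_contDiffOn
      ((contDiffOn_infty_iff_fderiv_of_isOpen hs).1 hu).2
  refine ⟨fun y => ω y b / (fderiv ℝ u y).det, ?_, fun y hy => ?_⟩
  · exact ((ContinuousMultilinearMap.apply ℝ _ ℝ b).contDiff.comp_contDiffOn hω).div hJ_smooth hJ
  · exact congrArg AlternatingMap.toMultilinearMap
      (AlternatingMap.eq_smul_basis_det_compLinearMap b
        ⟨(ω y).toMultilinearMap, fun v i j hv hij => halt y hy v i j hij hv⟩ (hJ y hy))

section InteriorProduct

variable {ι : Type*} [Fintype ι] [DecidableEq ι] {q r : ℕ}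

/-- `i_V ω` in coordinates. The reversed basis vectors `s i.rev` match the convention
`i_{X₁ ∧ ⋯ ∧ X_q} ω = ω (X_q, …, X₁, ⋯)`, and `1 / q!` compensates for summing over all
`s : Fin q → ι` rather than over increasing ones. -/
noncomputable def interiorProduct (V : MultilinearMap ℝ (fun _ : Fin q => (ι → ℝ) →L[ℝ] ℝ) ℝ)
    (ω : MultilinearMap ℝ (fun _ : Fin (q + r) => ι → ℝ) ℝ) :
    MultilinearMap ℝ (fun _ : Fin r => ι → ℝ) ℝ :=
  (1 / (q.factorial : ℝ)) • ∑ s : Fin q → ι,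
    V (fun i => ContinuousLinearMap.proj (s i)) •
      ω.curryAppendLeft (fun i => Pi.single (s i.rev) 1)

theorem interiorProduct_apply (V : MultilinearMap ℝ (fun _ : Fin q => (ι → ℝ) →L[ℝ] ℝ) ℝ)
    (ω : MultilinearMap ℝ (fun _ : Fin (q + r) => ι → ℝ) ℝ) (z : Fin r → ι → ℝ) :
    interiorProduct V ω z = (1 / (q.factorial : ℝ)) * ∑ s : Fin q → ι,
      V (fun i => ContinuousLinearMap.proj (s i)) *
        ω (Fin.append (fun i => Pi.single (s i.rev) 1) z) := by
  simp [interiorProduct]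

theorem interiorProduct_smul_left (a : ℝ)
    (V : MultilinearMap ℝ (fun _ : Fin q => (ι → ℝ) →L[ℝ] ℝ) ℝ)
    (ω : MultilinearMap ℝ (fun _ : Fin (q + r) => ι → ℝ) ℝ) :
    interiorProduct (a • V) ω = a • interiorProduct V ω := by
  refine MultilinearMap.ext fun z => ?_
  simp only [interiorProduct_apply, smul_apply, smul_eq_mul, Finset.mul_sum]
  exact Finset.sum_congr rfl fun s _ => by ring

theorem interiorProduct_smul_right (a : ℝ)
    (V : MultilinearMap ℝ (fun _ : Fin q => (ι → ℝ) →L[ℝ] ℝ) ℝ)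
    (ω : MultilinearMap ℝ (fun _ : Fin (q + r) => ι → ℝ) ℝ) :
    interiorProduct V (a • ω) = a • interiorProduct V ω := by
  refine MultilinearMap.ext fun z => ?_
  simp only [interiorProduct_apply, smul_apply, smul_eq_mul, Finset.mul_sum]
  exact Finset.sum_congr rfl fun s _ => by ring

theorem interiorProduct_compLinearMap
    (V c : MultilinearMap ℝ (fun _ : Fin q => (ι → ℝ) →L[ℝ] ℝ) ℝ)
    (A : (ι → ℝ) →L[ℝ] (ι → ℝ)) (hc : ∀ w, c w = V (fun i => (w i).comp A))
    (M : MultilinearMap ℝ (fun _ : Fin (q + r) => ι → ℝ) ℝ) (z : Fin r → ι → ℝ) :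
    interiorProduct V (M.compLinearMap fun _ => (A : (ι → ℝ) →ₗ[ℝ] (ι → ℝ))) z =
      interiorProduct c M (fun i => A (z i)) := by
  -- Both sides are double sums over `s t : Fin q → ι` weighted by `∏ i, A_{t i, s i}`:
  -- expand `c` on the right, and the first `q` slots of `M ∘ A` on the left.
  have hc_expand : ∀ t : Fin q → ι, c (fun i => ContinuousLinearMap.proj (t i)) =
      ∑ s : Fin q → ι, (∏ i, A (Pi.single (s i) 1) (t i)) *
        V (fun i => ContinuousLinearMap.proj (s i)) := fun t => by
    have hproj : ∀ j, (ContinuousLinearMap.proj j).comp A =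
        ∑ k, A (Pi.single k 1) j • ContinuousLinearMap.proj (R := ℝ) (φ := fun _ : ι => ℝ) k :=
      fun j => ContinuousLinearMap.eq_sum_smul_proj_s13 _
    simp_rw [hc, hproj]
    exact V.map_sum_smul _ _
  let m := (M.curryAppendRight fun i => A (z i)).domDomCongr Fin.revPerm
  have hm : ∀ a, m a = M (Fin.append (fun i => a i.rev) fun i => A (z i)) := fun a => by
    simp [m]
  have hM_expand : ∀ s : Fin q → ι,
      M (fun j => A (Fin.append (fun i => Pi.single (s i.rev) 1) z j)) =
        ∑ t : Fin q → ι, (∏ i, A (Pi.single (s i) 1) (t i)) *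
          M (Fin.append (fun i => Pi.single (t i.rev) 1) fun i => A (z i)) := fun s => by
    calc M (fun j => A (Fin.append (fun i => Pi.single (s i.rev) 1) z j))
        = m (fun i => A (Pi.single (s i) 1)) := by
          rw [hm]
          congr 1
          funext j
          refine Fin.addCases (fun i => ?_) (fun i => ?_) j <;> simp
      _ = _ := by
          rw [m.apply_eq_sum_pi_single]
          simp only [hm, smul_eq_mul]
  simp only [interiorProduct_apply, MultilinearMap.compLinearMap_apply,
    ContinuousLinearMap.coe_coe, hc_expand, hM_expand, Finset.mul_sum, Finset.sum_mul]
  rw [Finset.sum_comm]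
  exact Finset.sum_congr rfl fun t _ => Finset.sum_congr rfl fun s _ => by ring

end InteriorProduct

theorem interiorProduct_conformalConstantCoefficients_general (q r : ℕ)
    (U : Set (Fin (q + r) → ℝ))
    (V : (Fin (q + r) → ℝ) → (((Fin (q + r) → ℝ) →L[ℝ] ℝ) [×q]→L[ℝ] ℝ))
    (ωn : (Fin (q + r) → ℝ) → ((Fin (q + r) → ℝ) [×(q + r)]→L[ℝ] ℝ))
    (hωn : ContDiffOn ℝ (⊤ : ℕ∞) ωn U)
    (haltω : ∀ y ∈ U, ∀ v : Fin (q + r) → (Fin (q + r) → ℝ), ∀ i j, i ≠ j →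
      v i = v j → ωn y v = 0)
    (x : Fin (q + r) → ℝ)
    (hcc : HasConformalConstantCoefficientsVecAt (q + r) q U V x)
    (ιVω : (Fin (q + r) → ℝ) → (Fin r → (Fin (q + r) → ℝ)) → ℝ)
    (hιVω : ∀ y : Fin (q + r) → ℝ, ∀ z : Fin r → (Fin (q + r) → ℝ),
      ιVω y z = (1 / (q.factorial : ℝ)) *
        ∑ s : Fin q → Fin (q + r),
          V y (fun i => ContinuousLinearMap.proj (s i)) *
            ωn y (Fin.append (fun i : Fin q => Pi.single (s i.rev) (1 : ℝ)) z)) :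
    ∃ W : Set (Fin (q + r) → ℝ), IsOpen W ∧ x ∈ W ∧ W ⊆ U ∧
      ∃ f : (Fin (q + r) → ℝ) → ℝ, ContDiffOn ℝ (⊤ : ℕ∞) f W ∧
        ∃ ω' : (Fin (q + r) → ℝ) → ((Fin (q + r) → ℝ) [×r]→L[ℝ] ℝ),
          HasConstantCoefficientsFormAt (q + r) r Set.univ ω' x ∧
          ∀ y ∈ W, ∀ z : Fin r → (Fin (q + r) → ℝ), ιVω y z = f y * ω' y z := by
  obtain ⟨W₁, hW₁o, hxW₁, hW₁U, g, hg, V', ⟨W₂, hW₂o, hxW₂, -, u, hu, huinj, huim, hubij, c, hc⟩,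
    hVg⟩ := hcc
  obtain ⟨h, hh, hωh⟩ := exists_contDiffOn_eq_smul_det_comp_fderiv (hW₁o.inter hW₂o)
    (hωn.mono (Set.inter_subset_left.trans hW₁U)) (fun y hy => haltω y (hW₁U hy.1))
    (hu.mono Set.inter_subset_right) (fun y hy => hubij y hy.2)
  let D := (Pi.basisFun ℝ (Fin (q + r))).det.toMultilinearMap
  let c' : (Fin (q + r) → ℝ) [×r]→L[ℝ] ℝ :=
    ⟨interiorProduct c.toMultilinearMap D, MultilinearMap.continuous_on_pi _⟩
  refine ⟨W₁ ∩ W₂, hW₁o.inter hW₂o, ⟨hxW₁, hxW₂⟩, Set.inter_subset_left.trans hW₁U,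
    fun y => g y * h y, (hg.mono Set.inter_subset_left).mul hh,
    fun y => c'.compContinuousLinearMap fun _ => fderiv ℝ u y,
    ⟨W₂, hW₂o, hxW₂, Set.subset_univ _, u, hu, huinj, huim, hubij, c', fun _ _ _ => rfl⟩,
    fun y hy z => ?_⟩
  calc ιVω y z = interiorProduct (V y).toMultilinearMap (ωn y).toMultilinearMap z := by
        rw [hιVω, interiorProduct_apply]
        rfl
    _ = g y * (h y * interiorProduct c.toMultilinearMap D fun i => fderiv ℝ u y (z i)) := by
        rw [hVg y hy.1, ContinuousMultilinearMap.toMultilinearMap_smul, interiorProduct_smul_left,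
          hωh y hy, interiorProduct_smul_right, smul_apply, smul_apply,
          interiorProduct_compLinearMap _ _ _ (hc y hy.2)]
        rfl
    _ = _ := (mul_assoc _ _ _).symm

/-- Remark 1.22: with `n = q + r` and `1 ≤ q ≤ n`, if a smooth
`q`-vector field `V` has conformal constant coefficients near `x ∈ U` and `ω_n` is a
smooth nowhere-vanishing `n`-form on `U`, then the `(n−q)`-form `i_V ω_n` — given in
coordinates by `(i_V ω_n)_y(z) = (1/q!) Σ_s V_y(ε^{s(0)},…,ε^{s(q-1)})
ω_n(e_{s(q-1)},…,e_{s(0)}, z₁,…,z_r)` — has conformal constant coefficients near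
`x`: it equals `f·ω′` near `x` with `f` smooth and `ω′` of constant coefficients. -/
theorem interiorProduct_conformalConstantCoefficients (q r : ℕ) (hq : 1 ≤ q)
    (U : Set (Fin (q + r) → ℝ)) (hU : IsOpen U)
    (V : (Fin (q + r) → ℝ) → (((Fin (q + r) → ℝ) →L[ℝ] ℝ) [×q]→L[ℝ] ℝ))
    (hV : ContDiffOn ℝ (⊤ : ℕ∞) V U)
    (haltV : ∀ y ∈ U, ∀ w : Fin q → ((Fin (q + r) → ℝ) →L[ℝ] ℝ), ∀ i j, i ≠ j →
      w i = w j → V y w = 0)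
    (ωn : (Fin (q + r) → ℝ) → ((Fin (q + r) → ℝ) [×(q + r)]→L[ℝ] ℝ))
    (hωn : ContDiffOn ℝ (⊤ : ℕ∞) ωn U)
    (haltω : ∀ y ∈ U, ∀ v : Fin (q + r) → (Fin (q + r) → ℝ), ∀ i j, i ≠ j →
      v i = v j → ωn y v = 0)
    (hωn0 : ∀ y ∈ U, ωn y ≠ 0)
    (x : Fin (q + r) → ℝ) (hx : x ∈ U)
    (hcc : HasConformalConstantCoefficientsVecAt (q + r) q U V x)
    (ιVω : (Fin (q + r) → ℝ) → (Fin r → (Fin (q + r) → ℝ)) → ℝ)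
    (hιVω : ∀ y : Fin (q + r) → ℝ, ∀ z : Fin r → (Fin (q + r) → ℝ),
      ιVω y z = (1 / (q.factorial : ℝ)) *
        ∑ s : Fin q → Fin (q + r),
          V y (fun i => ContinuousLinearMap.proj (s i)) *
            ωn y (Fin.append (fun i : Fin q => Pi.single (s i.rev) (1 : ℝ)) z)) :
    ∃ W : Set (Fin (q + r) → ℝ), IsOpen W ∧ x ∈ W ∧ W ⊆ U ∧
      ∃ f : (Fin (q + r) → ℝ) → ℝ, ContDiffOn ℝ (⊤ : ℕ∞) f W ∧
        ∃ ω' : (Fin (q + r) → ℝ) → ((Fin (q + r) → ℝ) [×r]→L[ℝ] ℝ),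
          HasConstantCoefficientsFormAt (q + r) r Set.univ ω' x ∧
          ∀ y ∈ W, ∀ z : Fin r → (Fin (q + r) → ℝ), ιVω y z = f y * ω' y z :=
  interiorProduct_conformalConstantCoefficients_general q r U V ωn hωn haltω x hcc ιVω hιVω
end

section
/- Let U ⊆ ℝⁿ be open and let V = (v^i_j) : U → GL(n,ℝ) be a smooth matrix-valued map. Then the following two conditions are equivalent at every point of U: (a) ∂(V⁻¹)^h_i/∂x^j = ∂(V⁻¹)^h_j/∂xⁱ for all h,i,j = 1,…,n (i.e. each row of V⁻¹, viewed as a 1-form, is closed); (b) Σ_{j=1}^{n} v^j_m · ∂v^k_l/∂x^j = Σ_{i=1}^{n} (∂v^k_m/∂xⁱ) · v^i_l for all k,l,m = 1,…,n. -/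
/-!
The derivative of matrix inversion gives `∂ⱼ(V⁻¹) = -V⁻¹ (∂ⱼV) V⁻¹`. Let `T k` be the matrix
`(l, j) ↦ ∂ⱼ vᵏₗ`. Then (a) says that `∑ₖ (V⁻¹)ʰₖ • (V⁻¹)ᵀ T k` is symmetric for every `h`, and (b)
says that `T k V = Vᵀ ((V⁻¹)ᵀ T k) V` is symmetric for every `k`. As `V` is invertible, both
are equivalent to the symmetry of every `(V⁻¹)ᵀ T k`.
-/

open Matrix

open scoped Matrix.Norms.Operator in
theorem Matrix.fderiv_nonsing_inv_apply {m 𝕜 E : Type*} [Fintype m] [DecidableEq m]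
    [NontriviallyNormedField 𝕜] [CompleteSpace 𝕜] [NormedAddCommGroup E] [NormedSpace 𝕜 E]
    {M : E → Matrix m m 𝕜} {y : E} (hM : ∀ k l, DifferentiableAt 𝕜 (fun z => M z k l) y)
    (hy : IsUnit (M y)) (v : E) (h i : m) :
    fderiv 𝕜 (fun z => (M z)⁻¹ h i) y v =
      -((M y)⁻¹ * of (fun k l => fderiv 𝕜 (fun z => M z k l) y v) * (M y)⁻¹) h i := by
  -- Instance search does not match `Matrix.instCompleteSpace` against the operator-norm uniformity.
  have : HasSummableGeomSeries (Matrix m m 𝕜) :=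
    @instHasSummableGeomSeriesOfCompleteSpace _ _ (FiniteDimensional.complete 𝕜 _)
  have hMd : HasFDerivAt M (ContinuousLinearMap.pi fun k => ContinuousLinearMap.pi fun l =>
      fderiv 𝕜 (fun z => M z k l) y) y :=
    hasFDerivAt_pi.2 fun k => hasFDerivAt_pi.2 fun l => (hM k l).hasFDerivAt
  let entry : Matrix m m 𝕜 →L[𝕜] 𝕜 := LinearMap.toContinuousLinearMap (entryLinearMap 𝕜 𝕜 h i)
  obtain ⟨u, hu⟩ := hy
  have hinv := entry.hasFDerivAt.comp y ((hu ▸ hasFDerivAt_ringInverse (𝕜 := 𝕜) u).comp y hMd)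
  simp only [nonsing_inv_eq_ringInverse]
  rw [show (fun z => Ring.inverse (M z) h i) = entry ∘ Ring.inverse ∘ M from rfl, hinv.fderiv,
    ← hu, Ring.inverse_unit]
  rfl

namespace Matrix

variable {m n R : Type*} [Fintype m]

theorem IsSymm.transpose_mul_mul [CommSemiring R] {X : Matrix m m R} (hX : X.IsSymm)
    (A : Matrix m n R) : (Aᵀ * X * A).IsSymm := by
  simp [IsSymm, transpose_mul, hX.eq, Matrix.mul_assoc]

variable [DecidableEq m] [CommRing R]

theorem isSymm_transpose_mul_mul_iff {A X : Matrix m m R} (hA : IsUnit A) :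
    (Aᵀ * X * A).IsSymm ↔ X.IsSymm := by
  refine ⟨fun h => ?_, fun h => h.transpose_mul_mul A⟩
  have hdet := (isUnit_iff_isUnit_det A).mp hA
  have hX : A⁻¹ᵀ * (Aᵀ * X * A) * A⁻¹ = X := by
    rw [← Matrix.mul_assoc, ← Matrix.mul_assoc, ← transpose_mul, mul_nonsing_inv _ hdet,
      transpose_one, Matrix.one_mul, mul_nonsing_inv_cancel_right _ _ hdet]
  exact hX ▸ h.transpose_mul_mul A⁻¹

theorem forall_isSymm_sum_smul_iff {W : Matrix m m R} (hW : IsUnit W) (X : m → Matrix n n R) :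
    (∀ h, (∑ k, W h k • X k).IsSymm) ↔ ∀ k, (X k).IsSymm := by
  have hentry : ∀ i j, (∀ h, (∑ k, W h k • X k) i j = (∑ k, W h k • X k) j i) ↔
      ∀ k, X k i j = X k j i := by
    intro i j
    simpa [funext_iff, mulVec, dotProduct, Matrix.sum_apply] using
      (mulVec_injective_of_isUnit hW).eq_iff (a := fun k => X k i j) (b := fun k => X k j i)
  simp only [IsSymm.ext_iff]
  exact ⟨fun H k i j => (hentry j i).1 (fun h => H h i j) k,
    fun H h i j => (hentry j i).2 (fun k => H k i j) h⟩

theorem forall_inv_mul_mul_inv_apply_comm_iff {A : Matrix m m R} (hA : IsUnit A)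
    (D : m → Matrix m m R) :
    (∀ h i j, (A⁻¹ * D j * A⁻¹) h i = (A⁻¹ * D i * A⁻¹) h j) ↔
      ∀ k l p, ∑ j, A j p * D j k l = ∑ i, D i k p * A i l := by
  have hdet := (isUnit_iff_isUnit_det A).mp hA
  let T : m → Matrix m m R := fun k => of fun l j => D j k l
  have hsandwich : ∀ h i j, (A⁻¹ * D j * A⁻¹) h i = (∑ k, A⁻¹ h k • (A⁻¹ᵀ * T k)) i j := by
    intro h i j
    simp only [mul_apply, sum_apply, smul_apply, smul_eq_mul, transpose_apply, T, of_apply,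
      Finset.sum_mul, Finset.mul_sum]
    rw [Finset.sum_comm]
    exact Finset.sum_congr rfl fun _ _ => Finset.sum_congr rfl fun _ _ => by ring
  have hcontract : ∀ k l p, ∑ j, A j p * D j k l = (Aᵀ * (A⁻¹ᵀ * T k) * A) l p := by
    intro k l p
    rw [← Matrix.mul_assoc, ← transpose_mul, nonsing_inv_mul _ hdet, transpose_one,
      Matrix.one_mul, mul_apply]
    exact Finset.sum_congr rfl fun _ _ => mul_comm _ _
  have hcontract' : ∀ k l p, ∑ i, D i k p * A i l = (Aᵀ * (A⁻¹ᵀ * T k) * A) p l := by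
    intro k l p
    simp only [mul_comm (D _ _ _)]
    exact hcontract k p l
  calc (∀ h i j, (A⁻¹ * D j * A⁻¹) h i = (A⁻¹ * D i * A⁻¹) h j)
      ↔ ∀ h, (∑ k, A⁻¹ h k • (A⁻¹ᵀ * T k)).IsSymm := by
        simp only [IsSymm.ext_iff, hsandwich]
        exact ⟨fun H h i j => H h j i, fun H h i j => H h j i⟩
    _ ↔ ∀ k, (Aᵀ * (A⁻¹ᵀ * T k) * A).IsSymm := by
        rw [forall_isSymm_sum_smul_iff (isUnit_nonsing_inv_iff.mpr hA)]
        simp only [isSymm_transpose_mul_mul_iff hA]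
    _ ↔ ∀ k l p, ∑ j, A j p * D j k l = ∑ i, D i k p * A i l := by
        simp only [IsSymm.ext_iff, hcontract, hcontract']
        exact ⟨fun H k l p => H k p l, fun H k i j => H k j i⟩

end Matrix

/-- Corollary 3.3, compatibility system: for a smooth map
`V = (vⁱⱼ) : U → GL(n,ℝ)`, the following are equivalent at every point of `U`:
(a) `∂(V⁻¹)ʰᵢ/∂xʲ = ∂(V⁻¹)ʰⱼ/∂xⁱ` for all `h,i,j` (each row of `V⁻¹`, viewed as a
`1`-form, is closed); (b) `Σⱼ vʲₘ ∂vᵏₗ/∂xʲ = Σᵢ (∂vᵏₘ/∂xⁱ) vⁱₗ` for all `k,l,m`. -/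
theorem inverse_jacobian_closed_iff_firstOrder_system (n : ℕ)
    (U : Set (Fin n → ℝ)) (hU : IsOpen U)
    (V : (Fin n → ℝ) → Matrix (Fin n) (Fin n) ℝ)
    (hV : ∀ k l : Fin n, ContDiffOn ℝ (⊤ : ℕ∞) (fun y => V y k l) U)
    (hinv : ∀ y ∈ U, IsUnit (V y)) :
    ∀ y ∈ U,
      ((∀ h i j : Fin n,
          fderiv ℝ (fun z => (V z)⁻¹ h i) y (Pi.single j (1 : ℝ)) =
            fderiv ℝ (fun z => (V z)⁻¹ h j) y (Pi.single i (1 : ℝ)))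
        ↔
       (∀ k l m : Fin n,
          ∑ j : Fin n, V y j m *
              fderiv ℝ (fun z => V z k l) y (Pi.single j (1 : ℝ)) =
            ∑ i : Fin n,
              fderiv ℝ (fun z => V z k m) y (Pi.single i (1 : ℝ)) * V y i l)) := by
  intro y hy
  have hdiff : ∀ k l, DifferentiableAt ℝ (fun z => V z k l) y := fun k l =>
    ((hV k l).contDiffAt (hU.mem_nhds hy)).differentiableAt (by simp)
  simp only [fderiv_nonsing_inv_apply hdiff (hinv y hy), neg_inj]
  exact forall_inv_mul_mul_inv_apply_comm_iff (hinv y hy)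
    fun j => of fun k l => fderiv ℝ (fun z => V z k l) y (Pi.single j 1)
end
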